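/- arXiv:0906.2795 — 4 statements merged into one kernel-verified Lean document; each statement's English description precedes it below -/
import Mathlib

section
/- There exists a bijection φ between the set of cyclic permutations of {1,...,n+1} (permutations consisting of a single (n+1)-cycle) and the set of all permutations of {1,...,n} such that for every cyclic permutation π of {1,...,n+1}, the descent set of the word π(1)π(2)...π(n) equals the descent set of φ(π). -/
def descSeq {n : ℕ} (f : Fin n → ℕ) : Finset ℕ :=
  (Finset.range (n - 1)).filter
    (fun i => ∃ h : i + 1 < n, f ⟨i + 1, h⟩ < f ⟨i, Nat.lt_of_succ_lt h⟩)

def descSet {n : ℕ} (σ : Equiv.Perm (Fin n)) : Finset ℕ :=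
  descSeq (fun i => (σ i : ℕ))

def IsCyclic' {n : ℕ} (π : Equiv.Perm (Fin n)) : Prop :=
  ∀ x y : Fin n, ∃ k : ℕ, (π ^ k) x = y

def compParts (n : ℕ) (I : Finset ℕ) : Multiset ℕ :=
  ↑(List.zipWith (· - ·) ((I.sort (· ≤ ·)).map (· + 1) ++ [n])
      (0 :: (I.sort (· ≤ ·)).map (· + 1)))

def fullCycleType {n : ℕ} (π : Equiv.Perm (Fin n)) : Multiset ℕ :=
  π.cycleType + Multiset.replicate (n - π.support.card) 1

def InT0 (n : ℕ) (τ : Fin n → ℕ) : Prop :=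
  ∃ (π : Equiv.Perm (Fin n)) (k : Fin n), IsCyclic' π ∧
    τ = Function.update (fun i => ((π i : ℕ) + 1)) k 0

def InU (n : ℕ) (τ : Fin n → ℕ) : Prop :=
  ∃ (π : Equiv.Perm (Fin n)) (k : Fin n), IsCyclic' π ∧
    τ = Function.update (fun i => ((π i : ℕ) + 1)) k (n + 1)

def extPerm {n : ℕ} (π : Equiv.Perm (Fin n)) : Equiv.Perm (Fin (n + 1)) :=
  (finSuccEquivLast (n := n)).symm.permCongr π.optionCongr

def extCycle {n : ℕ} (π : Equiv.Perm (Fin n)) (k : Fin n) : Equiv.Perm (Fin (n + 1)) :=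
  extPerm π * Equiv.swap (Fin.castSucc k) (Fin.last n)

/-!
Fix `S ⊆ ℕ`. A permutation of `[n]` has its descents in `S` iff it increases on the blocks cut
out by `S`, and standardization identifies such permutations with the rearrangements `w` of the
block word of `S`. Appending a new top letter to `w` gives a necklace all of whose rotations are
distinct; ranking the rotations lexicographically and sending each one to the next defines a
cyclic permutation of `[n + 1]`, whose restriction to `[n]` again increases on the blocks of `S`,
and `w` is recovered by reading the levels along the cycle from the top point (Gessel–Reutenauer).
Hence for every `S` the two families with descents inside `S` are equinumerous, Möbius inversion
over `S` gives equinumerous fibres for every exact descent set, and fibrewise bijections glue.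
-/

open Finset Function Equiv

section Rearrangement
variable {α : Type*} [LinearOrder α] {m : ℕ}

theorem eq_of_monotone_of_perm_ofFn {f g : Fin m → α} (hf : Monotone f) (hg : Monotone g)
    (h : (List.ofFn f).Perm (List.ofFn g)) : f = g :=
  List.ofFn_injective (h.eq_of_sortedLE hf.sortedLE_ofFn hg.sortedLE_ofFn)

theorem eq_sort_of_strictMono_comp {f : Fin m → α} {σ : Perm (Fin m)}
    (h : StrictMono (f ∘ σ)) :
    σ = Tuple.sort f :=
  Tuple.eq_sort_iff.2 ⟨h.monotone, fun _ _ hij heq => absurd heq (h hij).ne⟩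

def StrictMonoOnLevels (ℓ : Fin m → α) (σ : Perm (Fin m)) : Prop :=
  ∀ ⦃i j⦄, i < j → ℓ i = ℓ j → σ i < σ j

variable {ℓ : Fin m → α}

theorem comp_sort_eq_of_perm {w : Fin m → α} (hℓ : Monotone ℓ)
    (hw : (List.ofFn w).Perm (List.ofFn ℓ)) : w ∘ Tuple.sort w = ℓ :=
  eq_of_monotone_of_perm_ofFn (Tuple.monotone_sort w) hℓ
    (((Tuple.sort w).ofFn_comp_perm w).trans hw)

theorem strictMonoOnLevels_sort {w : Fin m → α} (hℓ : Monotone ℓ)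
    (hw : (List.ofFn w).Perm (List.ofFn ℓ)) : StrictMonoOnLevels ℓ (Tuple.sort w) := by
  intro i j hij hlev
  rw [← comp_sort_eq_of_perm hℓ hw] at hlev
  exact (Tuple.eq_sort_iff.1 rfl).2 i j hij hlev

theorem sort_comp_inv {σ : Perm (Fin m)} (hℓ : Monotone ℓ) (hσ : StrictMonoOnLevels ℓ σ) :
    Tuple.sort (ℓ ∘ ⇑σ⁻¹) = σ := by
  refine (Tuple.eq_sort_iff.2 ⟨?_, fun i j hij hlev => hσ hij ?_⟩).symm
  · simpa [Function.comp_def] using hℓ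
  · simpa using hlev

/-- A word is sent to the permutation sorting it, ties being broken from left to right. -/
noncomputable def standardizationEquiv (hℓ : Monotone ℓ) :
    {σ : Perm (Fin m) // StrictMonoOnLevels ℓ σ} ≃
      {w : Fin m → α // (List.ofFn w).Perm (List.ofFn ℓ)} where
  toFun σ := ⟨ℓ ∘ ⇑σ.1⁻¹, σ.1⁻¹.ofFn_comp_perm ℓ⟩
  invFun w := ⟨Tuple.sort w.1, strictMonoOnLevels_sort hℓ w.2⟩
  left_inv σ := Subtype.ext (sort_comp_inv hℓ σ.2)
  right_inv w := by
    ext1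
    funext i
    simpa using (congrFun (comp_sort_eq_of_perm hℓ w.2) ((Tuple.sort w.1)⁻¹ i)).symm

end Rearrangement

section Descents
variable {m : ℕ}

theorem mem_descSet {σ : Perm (Fin m)} {i : ℕ} :
    i ∈ descSet σ ↔ ∃ h : i + 1 < m, σ ⟨i + 1, h⟩ < σ ⟨i, by omega⟩ := by
  simp only [descSet, descSeq, mem_filter, mem_range, Fin.lt_def]
  exact ⟨fun h => h.2, fun ⟨h, hlt⟩ => ⟨by omega, h, hlt⟩⟩

theorem apply_lt_apply_succ_of_notMem_descSet {σ : Perm (Fin m)} {i : ℕ} (hi : i ∉ descSet σ)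
    (h : i + 1 < m) : σ ⟨i, by omega⟩ < σ ⟨i + 1, h⟩ :=
  lt_of_le_of_ne (not_lt.1 fun hlt => hi (mem_descSet.2 ⟨h, hlt⟩))
    (σ.injective.ne (by simp))

theorem apply_lt_apply_of_forall_notMem_descSet {σ : Perm (Fin m)} {i j : Fin m} (hij : i < j)
    (h : ∀ k : ℕ, i ≤ k → k < j → k ∉ descSet σ) : σ i < σ j := by
  obtain ⟨i, hi⟩ := i
  obtain ⟨j, hj⟩ := j
  simp only [Fin.mk_lt_mk] at hij h
  replace hij : i + 1 ≤ j := hij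
  induction j, hij using Nat.le_induction with
  | base => exact apply_lt_apply_succ_of_notMem_descSet (h i le_rfl i.lt_succ_self) hj
  | succ j hij ih =>
    exact (ih (by omega) fun k hik hkj => h k hik (by omega)).trans
      (apply_lt_apply_succ_of_notMem_descSet (h j (by omega) j.lt_succ_self) hj)

theorem descSet_subset_iff (S : Finset ℕ) (σ : Perm (Fin m)) :
    descSet σ ⊆ S ↔ StrictMonoOnLevels (fun i : Fin m => Nat.count (· ∈ S) i) σ := by
  constructor
  · intro hS i j hij hlev
    refine apply_lt_apply_of_forall_notMem_descSet hij fun k hik hkj hk => ?_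
    have := (Nat.count_monotone _ hik).trans_lt (Nat.count_strict_mono (hS hk) hkj)
    exact this.ne hlev
  · intro hσ i hi
    obtain ⟨h, hlt⟩ := mem_descSet.1 hi
    by_contra hiS
    refine hlt.not_gt (hσ (Fin.mk_lt_mk.2 i.lt_succ_self) ?_)
    simp [Nat.count_succ, hiS]

end Descents

section Cycles
variable {m : ℕ} {ρ : Perm (Fin m)}

theorem IsCyclic'.minimalPeriod_eq (hρ : IsCyclic' ρ) (x : Fin m) : minimalPeriod ρ x = m := by
  classical
  have horb : MulAction.orbit (Subgroup.zpowers ρ) x = Set.univ :=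
    Set.eq_univ_of_forall fun y =>
      let ⟨k, hk⟩ := hρ x y
      ⟨⟨ρ ^ k, Subgroup.npow_mem_zpowers ρ k⟩, hk⟩
  have h := MulAction.minimalPeriod_eq_card (α := Perm (Fin m)) ρ x
  simp only [Perm.smul_def] at h
  simp [h, horb]

theorem IsCyclic'.pow_mod_apply (hρ : IsCyclic' ρ) (k : ℕ) (x : Fin m) :
    (ρ ^ (k % m)) x = (ρ ^ k) x := by
  have h := iterate_mod_minimalPeriod_eq (f := ρ) (x := x) (n := k)
  rwa [hρ.minimalPeriod_eq x, ← Perm.coe_pow, ← Perm.coe_pow] at h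

theorem IsCyclic'.injective_pow_apply (hρ : IsCyclic' ρ) (x : Fin m) :
    Injective fun p : Fin m => (ρ ^ (p : ℕ)) x := fun p q h =>
  Fin.ext <| iterate_injOn_Iio_minimalPeriod (f := ρ) (x := x)
    (by simp [hρ.minimalPeriod_eq]) (by simp [hρ.minimalPeriod_eq]) h

theorem IsCyclic'.conj (hρ : IsCyclic' ρ) (σ : Perm (Fin m)) :
    IsCyclic' (σ⁻¹ * ρ * σ) := by
  intro x y
  obtain ⟨k, hk⟩ := hρ (σ x) (σ y)
  refine ⟨k, ?_⟩
  have : (σ⁻¹ * ρ * σ) ^ k = σ⁻¹ * ρ ^ k * σ := by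
    simpa using conj_pow (a := σ⁻¹) (b := ρ) (i := k)
  simp [this, hk]

noncomputable def IsCyclic'.orbitPerm (hρ : IsCyclic' ρ) (x : Fin m) : Perm (Fin m) :=
  Equiv.ofBijective _ (Finite.injective_iff_bijective.1 (hρ.injective_pow_apply x))

theorem IsCyclic'.orbitPerm_apply (hρ : IsCyclic' ρ) (x p : Fin m) :
    hρ.orbitPerm x p = (ρ ^ (p : ℕ)) x := rfl

theorem IsCyclic'.orbitPerm_apply_eq_pow_apply (hρ : IsCyclic' ρ) (x : Fin m) {p q : Fin m}
    {k : ℕ} (h : (q : ℕ) = (p + k) % m) : hρ.orbitPerm x q = (ρ ^ k) (hρ.orbitPerm x p) := by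
  rw [orbitPerm_apply, orbitPerm_apply, h, hρ.pow_mod_apply, add_comm, pow_add, Perm.mul_apply]

end Cycles

section Rotation
variable {n : ℕ}

theorem val_finRotate_pow_apply (k : ℕ) (x : Fin (n + 1)) :
    ((finRotate (n + 1) ^ k) x : ℕ) = (x + k) % (n + 1) := by
  induction k with
  | zero => simp [Nat.mod_eq_of_lt x.isLt]
  | succ k ih =>
    rw [pow_succ', Perm.mul_apply, finRotate_apply, Fin.val_add, ih, Fin.val_one', Nat.add_mod_mod,
      Nat.mod_add_mod, add_assoc]

theorem isCyclic'_finRotate : IsCyclic' (finRotate (n + 1)) := by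
  intro x y
  refine ⟨y + (n + 1 - x), Fin.ext ?_⟩
  rw [val_finRotate_pow_apply, ← add_assoc, add_comm (x : ℕ), add_assoc,
    Nat.add_sub_cancel' x.isLt.le, Nat.add_mod_right, Nat.mod_eq_of_lt y.isLt]

theorem finRotate_pow_apply_zero (t : Fin n) : (finRotate (n + 1) ^ (t : ℕ)) 0 = t.castSucc :=
  Fin.ext <| by rw [val_finRotate_pow_apply]; simp [Nat.mod_eq_of_lt (t.isLt.trans n.lt_succ_self)]

end Rotation

section Necklace
variable {α : Type*} {n : ℕ}

def lexRotation (u : Fin (n + 1) → α) (p : Fin (n + 1)) : Lex (Fin (n + 1) → α) :=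
  toLex fun j => u (p + j)

variable [LinearOrder α]

noncomputable def rotationSort (u : Fin (n + 1) → α) : Perm (Fin (n + 1)) :=
  Tuple.sort (lexRotation u)

/-- Advancing one step along the circular word `u`, seen on the ranks of its rotations in
lexicographic order. -/
noncomputable def necklacePerm (u : Fin (n + 1) → α) : Perm (Fin (n + 1)) :=
  (rotationSort u)⁻¹ * finRotate (n + 1) * rotationSort u

variable {u : Fin (n + 1) → α}

theorem eq_last_of_apply_eq_apply_last (hu : ∀ i : Fin n, u i.castSucc < u (Fin.last n))
    {p : Fin (n + 1)} (hp : u p = u (Fin.last n)) : p = Fin.last n := by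
  by_contra h
  obtain ⟨i, rfl⟩ := Fin.exists_castSucc_eq.2 h
  exact (hu i).ne hp

theorem lexRotation_injective (hu : ∀ i : Fin n, u i.castSucc < u (Fin.last n)) :
    Injective (lexRotation u) := by
  intro p q h
  have h' : u (p + (Fin.last n - p)) = u (q + (Fin.last n - p)) := congrFun h _
  rw [add_sub_cancel] at h'
  exact (add_right_cancel ((eq_last_of_apply_eq_apply_last hu h'.symm).trans
    (add_sub_cancel p _).symm)).symm

theorem lexRotation_lt_lexRotation_last (hu : ∀ i : Fin n, u i.castSucc < u (Fin.last n))
    {p : Fin (n + 1)} (hp : p ≠ Fin.last n) : lexRotation u p < lexRotation u (Fin.last n) := by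
  obtain ⟨i, rfl⟩ := Fin.exists_castSucc_eq.2 hp
  exact ⟨0, fun j hj => absurd hj (Fin.not_lt_zero j), by simpa [lexRotation] using hu i⟩

theorem lexRotation_add_one_lt {p q : Fin (n + 1)} (h : lexRotation u p < lexRotation u q)
    (h₀ : u p = u q) : lexRotation u (p + 1) < lexRotation u (q + 1) := by
  have hshift (x : Fin (n + 1)) (j : Fin n) : x + 1 + j.castSucc = x + j.succ := by
    rw [add_right_comm, add_assoc, Fin.coeSucc_eq_succ]
  obtain ⟨i, hagree, hlt⟩ := h
  obtain ⟨k, rfl⟩ : ∃ k : Fin n, k.succ = i :=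
    Fin.exists_succ_eq.2 fun hi => by simp_all [lexRotation]
  refine ⟨k.castSucc, fun j hj => ?_, ?_⟩
  · obtain ⟨j, rfl⟩ := Fin.exists_castSucc_eq.2 (Fin.ne_last_of_lt hj)
    simpa [lexRotation, hshift] using hagree j.succ (by simpa using hj)
  · simpa [lexRotation, hshift] using hlt

theorem strictMono_lexRotation_comp_rotationSort
    (hu : ∀ i : Fin n, u i.castSucc < u (Fin.last n)) :
    StrictMono (lexRotation u ∘ rotationSort u) :=
  (Tuple.monotone_sort _).strictMono_of_injective
    ((lexRotation_injective hu).comp (Equiv.injective _))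

theorem rotationSort_last (hu : ∀ i : Fin n, u i.castSucc < u (Fin.last n)) :
    rotationSort u (Fin.last n) = Fin.last n := by
  by_contra h
  have hle : lexRotation u (Fin.last n) ≤ lexRotation u (rotationSort u (Fin.last n)) := by
    simpa [rotationSort] using
      Tuple.monotone_sort (lexRotation u) (Fin.le_last ((rotationSort u)⁻¹ (Fin.last n)))
  exact (lexRotation_lt_lexRotation_last hu h).not_ge hle

theorem comp_rotationSort_eq {ℓ : Fin (n + 1) → α} (hℓ : Monotone ℓ)
    (hperm : (List.ofFn u).Perm (List.ofFn ℓ)) : u ∘ rotationSort u = ℓ := by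
  refine eq_of_monotone_of_perm_ofFn (fun a b hab => ?_) hℓ
    (((rotationSort u).ofFn_comp_perm u).trans hperm)
  simpa [lexRotation, rotationSort] using
    Pi.apply_le_of_toLex (i := 0) (Tuple.monotone_sort (lexRotation u) hab)
      fun j hj => absurd hj (Fin.not_lt_zero j)

theorem necklacePerm_apply (v : Fin (n + 1)) :
    necklacePerm u v = (rotationSort u)⁻¹ (rotationSort u v + 1) := by
  simp [necklacePerm, finRotate_apply]

theorem necklacePerm_pow (k : ℕ) :
    necklacePerm u ^ k = (rotationSort u)⁻¹ * finRotate (n + 1) ^ k * rotationSort u := by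
  simpa [necklacePerm] using
    conj_pow (a := (rotationSort u)⁻¹) (b := finRotate (n + 1)) (i := k)

theorem isCyclic'_necklacePerm : IsCyclic' (necklacePerm u) :=
  isCyclic'_finRotate.conj _

theorem strictMonoOnLevels_necklacePerm {ℓ : Fin (n + 1) → α} (hℓ : Monotone ℓ)
    (hu : ∀ i : Fin n, u i.castSucc < u (Fin.last n))
    (hperm : (List.ofFn u).Perm (List.ofFn ℓ)) :
    StrictMonoOnLevels ℓ (necklacePerm u) := by
  intro v v' hvv' hlev
  have hmono := strictMono_lexRotation_comp_rotationSort hu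
  have hfirst : u (rotationSort u v) = u (rotationSort u v') := by
    simpa [← comp_rotationSort_eq hℓ hperm] using hlev
  rw [necklacePerm_apply, necklacePerm_apply, ← hmono.lt_iff_lt]
  simp only [comp_apply, Perm.coe_inv, Equiv.apply_symm_apply]
  exact lexRotation_add_one_lt (hmono hvv') hfirst

end Necklace

section CycleWord
variable {α : Type*} {n : ℕ} {ℓ : Fin (n + 1) → α}

theorem perm_ofFn_snoc_iff {w : Fin n → α} :
    (List.ofFn (Fin.snoc w (ℓ (Fin.last n)) : Fin (n + 1) → α)).Perm (List.ofFn ℓ) ↔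
      (List.ofFn w).Perm (List.ofFn (ℓ ∘ Fin.castSucc)) := by
  rw [List.ofFn_succ', List.ofFn_succ' ℓ]
  simp only [Fin.snoc_castSucc, Fin.snoc_last, List.concat_eq_append]
  exact List.perm_append_right_iff _

def itinerary (ℓ : Fin (n + 1) → α) (ρ : Perm (Fin (n + 1))) (v : Fin (n + 1)) :
    Lex (Fin (n + 1) → α) :=
  toLex fun j => ℓ ((ρ ^ (j : ℕ)) v)

def cycleToWord (ℓ : Fin (n + 1) → α) (ρ : Perm (Fin (n + 1))) : Fin n → α :=
  fun t => ℓ ((ρ ^ (t : ℕ)) (ρ (Fin.last n)))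

variable {ρ : Perm (Fin (n + 1))}

theorem snoc_cycleToWord (hρ : IsCyclic' ρ) :
    (Fin.snoc (cycleToWord ℓ ρ) (ℓ (Fin.last n)) : Fin (n + 1) → α) =
      ℓ ∘ hρ.orbitPerm (ρ (Fin.last n)) := by
  funext p
  induction p using Fin.lastCases with
  | last =>
    have : (ρ ^ n) (ρ (Fin.last n)) = Fin.last n := by
      rw [← Perm.mul_apply, ← pow_succ, ← hρ.pow_mod_apply, Nat.mod_self, pow_zero,
        Perm.one_apply]
    simp [IsCyclic'.orbitPerm_apply, this]
  | cast t => simp [cycleToWord, IsCyclic'.orbitPerm_apply]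

theorem lexRotation_snoc_cycleToWord (hρ : IsCyclic' ρ) (p : Fin (n + 1)) :
    lexRotation (Fin.snoc (cycleToWord ℓ ρ) (ℓ (Fin.last n)) : Fin (n + 1) → α) p =
      itinerary ℓ ρ (hρ.orbitPerm (ρ (Fin.last n)) p) := by
  rw [snoc_cycleToWord hρ, lexRotation, itinerary]
  congr 1
  funext j
  rw [comp_apply, hρ.orbitPerm_apply_eq_pow_apply _ (Fin.val_add p j)]

variable [LinearOrder α]

theorem apply_lt_last_of_perm (hmax : ∀ i : Fin n, ℓ i.castSucc < ℓ (Fin.last n))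
    {w : Fin n → α} (hw : (List.ofFn w).Perm (List.ofFn (ℓ ∘ Fin.castSucc))) (t : Fin n) :
    w t < ℓ (Fin.last n) := by
  obtain ⟨i, hi⟩ := List.mem_ofFn.1 (hw.subset (List.mem_ofFn.2 ⟨t, rfl⟩))
  exact hi ▸ hmax i

theorem strictMono_itinerary (hℓ : Monotone ℓ) (hρ : IsCyclic' ρ)
    (hinc : StrictMonoOnLevels ℓ ρ) : StrictMono (itinerary ℓ ρ) := by
  intro v v' hvv'
  have key (j : ℕ) (h : ∀ i < j, ℓ ((ρ ^ i) v) = ℓ ((ρ ^ i) v')) :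
      (ρ ^ j) v < (ρ ^ j) v' := by
    induction j with
    | zero => simpa using hvv'
    | succ j ih =>
      rw [pow_succ', Perm.mul_apply, Perm.mul_apply]
      exact hinc (ih fun i hi => h i (by omega)) (h j j.lt_succ_self)
  rcases lt_trichotomy (itinerary ℓ ρ v) (itinerary ℓ ρ v') with h | h | ⟨i, hagree, hlt⟩
  · exact h
  · -- equal itineraries would keep the orbit of `v` below that of `v'`, which passes through `0`
    obtain ⟨k, hk⟩ := (hρ.orbitPerm v').surjective 0
    have hk' := key k fun i hi => congrFun h ⟨i, hi.trans k.isLt⟩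
    rw [← hρ.orbitPerm_apply v' k, hk] at hk'
    exact absurd hk' (Fin.not_lt_zero _)
  · refine absurd hlt (not_lt.2 (hℓ (key i fun j hj => ?_).le))
    exact (hagree ⟨j, hj.trans i.isLt⟩ hj).symm

theorem rotationSort_snoc_cycleToWord (hℓ : Monotone ℓ) (hρ : IsCyclic' ρ)
    (hinc : StrictMonoOnLevels ℓ ρ) :
    rotationSort (Fin.snoc (cycleToWord ℓ ρ) (ℓ (Fin.last n)) : Fin (n + 1) → α) =
      (hρ.orbitPerm (ρ (Fin.last n)))⁻¹ := by
  refine (eq_sort_of_strictMono_comp ?_).symm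
  convert strictMono_itinerary hℓ hρ hinc using 1
  funext v
  simp [lexRotation_snoc_cycleToWord hρ]

theorem necklacePerm_snoc_cycleToWord (hℓ : Monotone ℓ) (hρ : IsCyclic' ρ)
    (hinc : StrictMonoOnLevels ℓ ρ) :
    necklacePerm (Fin.snoc (cycleToWord ℓ ρ) (ℓ (Fin.last n)) : Fin (n + 1) → α) = ρ := by
  set o := hρ.orbitPerm (ρ (Fin.last n))
  ext1 v
  obtain ⟨q, rfl⟩ := o.surjective v
  have hsucc : o (q + 1) = ρ (o q) := by
    simpa using hρ.orbitPerm_apply_eq_pow_apply _ (p := q) (q := q + 1) (k := 1)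
      (by rw [Fin.val_add, Fin.val_one', Nat.add_mod_mod])
  rw [necklacePerm_apply, rotationSort_snoc_cycleToWord hℓ hρ hinc, inv_inv, Perm.coe_inv,
    symm_apply_apply, hsucc]

theorem cycleToWord_necklacePerm (hℓ : Monotone ℓ) {w : Fin n → α}
    (hw : ∀ t, w t < ℓ (Fin.last n))
    (hperm :
      (List.ofFn (Fin.snoc w (ℓ (Fin.last n)) : Fin (n + 1) → α)).Perm (List.ofFn ℓ)) :
    cycleToWord ℓ (necklacePerm (Fin.snoc w (ℓ (Fin.last n)) : Fin (n + 1) → α)) = w := by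
  set u : Fin (n + 1) → α := Fin.snoc w (ℓ (Fin.last n))
  have hu : ∀ i : Fin n, u i.castSucc < u (Fin.last n) := by simpa [u] using hw
  funext t
  have hτ := congrFun (comp_rotationSort_eq hℓ hperm) ((rotationSort u)⁻¹ t.castSucc)
  simp only [comp_apply, Perm.coe_inv, apply_symm_apply] at hτ
  simp only [cycleToWord, necklacePerm_pow, necklacePerm_apply, Perm.mul_apply,
    rotationSort_last hu, Fin.last_add_one, Perm.coe_inv, apply_symm_apply]
  rw [finRotate_pow_apply_zero, ← hτ]
  simp [u]

/-- Gessel–Reutenauer: append the top letter `ℓ (last n)` to the word and rank the rotations of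
the resulting necklace. -/
noncomputable def wordCycleEquiv (hℓ : Monotone ℓ)
    (hmax : ∀ i : Fin n, ℓ i.castSucc < ℓ (Fin.last n)) :
    {w : Fin n → α // (List.ofFn w).Perm (List.ofFn (ℓ ∘ Fin.castSucc))} ≃
      {ρ : Perm (Fin (n + 1)) // IsCyclic' ρ ∧ StrictMonoOnLevels ℓ ρ} where
  toFun w := ⟨necklacePerm (Fin.snoc w.1 (ℓ (Fin.last n))), isCyclic'_necklacePerm,
    strictMonoOnLevels_necklacePerm hℓ (by simpa using apply_lt_last_of_perm hmax w.2)
      (perm_ofFn_snoc_iff.2 w.2)⟩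
  invFun ρ := ⟨cycleToWord ℓ ρ.1, perm_ofFn_snoc_iff.1 <| by
    rw [snoc_cycleToWord ρ.2.1]
    exact Perm.ofFn_comp_perm _ ℓ⟩
  left_inv w := Subtype.ext <|
    cycleToWord_necklacePerm hℓ (apply_lt_last_of_perm hmax w.2) (perm_ofFn_snoc_iff.2 w.2)
  right_inv ρ := Subtype.ext (necklacePerm_snoc_cycleToWord hℓ ρ.2.1 ρ.2.2)

end CycleWord

section Inversion
variable {α β ι : Type*} [Finite α] [Finite β] [DecidableEq ι]

theorem natCard_subset_eq_sum_powerset (f : α → Finset ι) (S : Finset ι) :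
    Nat.card {a // f a ⊆ S} = ∑ T ∈ S.powerset, Nat.card {a // f a = T} := by
  classical
  have := Fintype.ofFinite α
  simp only [Nat.card_eq_fintype_card, Fintype.card_subtype]
  rw [card_eq_sum_card_fiberwise (f := f) (t := S.powerset) fun a ha => by simpa using ha]
  refine sum_congr rfl fun T hT => congrArg card ?_
  ext a
  simp only [mem_filter, mem_univ, true_and, and_iff_right_iff_imp]
  exact fun ha => ha ▸ mem_powerset.1 hT

theorem natCard_eq_of_natCard_subset_eq {f : α → Finset ι} {g : β → Finset ι}
    (h : ∀ S, Nat.card {a // f a ⊆ S} = Nat.card {b // g b ⊆ S}) (T : Finset ι) :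
    Nat.card {a // f a = T} = Nat.card {b // g b = T} := by
  induction T using Finset.strongInduction with
  | H T ih =>
    have hsmaller : ∑ U ∈ T.powerset.erase T, Nat.card {a // f a = U} =
        ∑ U ∈ T.powerset.erase T, Nat.card {b // g b = U} :=
      sum_congr rfl fun U hU =>
        ih U (Finset.ssubset_iff_subset_ne.2
          ⟨mem_powerset.1 (mem_erase.1 hU).2, (mem_erase.1 hU).1⟩)
    have hT := h T
    rw [natCard_subset_eq_sum_powerset, natCard_subset_eq_sum_powerset,
      ← sum_erase_add _ _ (mem_powerset_self T), ← sum_erase_add _ _ (mem_powerset_self T),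
      hsmaller] at hT
    exact Nat.add_left_cancel hT

theorem exists_equiv_of_natCard_subset_eq {f : α → Finset ι} {g : β → Finset ι}
    (h : ∀ S, Nat.card {a // f a ⊆ S} = Nat.card {b // g b ⊆ S}) :
    ∃ e : α ≃ β, ∀ a, g (e a) = f a :=
  have hfib T := Finite.card_eq.1 (natCard_eq_of_natCard_subset_eq h T)
  ⟨Equiv.ofFiberEquiv fun T => (hfib T).some, Equiv.ofFiberEquiv_map _⟩

end Inversion

section Levels
variable {n : ℕ} (S : Finset ℕ)

theorem descSet_inter_range_subset_iff (ρ : Perm (Fin (n + 1))) :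
    descSet ρ ∩ range (n - 1) ⊆ S ↔ descSet ρ ⊆ insert (n - 1) S := by
  refine ⟨fun h i hi => ?_, fun h i hi => ?_⟩
  · obtain ⟨hi1, -⟩ := mem_descSet.1 hi
    rcases Nat.lt_or_ge i (n - 1) with hlt | hge
    · exact mem_insert_of_mem (h (mem_inter.2 ⟨hi, mem_range.2 hlt⟩))
    · exact mem_insert.2 (Or.inl (by omega))
  · obtain ⟨hi, hr⟩ := mem_inter.1 hi
    exact (mem_insert.1 (h hi)).resolve_left (by rw [mem_range] at hr; omega)

theorem count_mem_insert_pred {i : ℕ} (hi : i < n) :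
    Nat.count (· ∈ insert (n - 1) S) i = Nat.count (· ∈ S) i := by
  simp only [Nat.count_eq_card_filter_range]
  refine congrArg card (filter_congr fun x hx => ?_)
  rw [mem_range] at hx
  simp only [mem_insert, or_iff_right_iff_imp]
  omega

/-- Adding `n - 1` to `S` makes the last position a block of its own, on the top level: it
carries the extra letter of the necklace construction. -/
noncomputable def descSubsetEquiv :
    {σ : Perm (Fin n) // descSet σ ⊆ S} ≃
      {ρ : Perm (Fin (n + 1)) // IsCyclic' ρ ∧ descSet ρ ∩ range (n - 1) ⊆ S} :=
  let ℓ : Fin (n + 1) → ℕ := fun v => Nat.count (· ∈ insert (n - 1) S) v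
  have hℓ : Monotone ℓ := fun _ _ h => Nat.count_monotone _ h
  have hmax (i : Fin n) : ℓ i.castSucc < ℓ (Fin.last n) :=
    (Nat.count_monotone _ (Nat.le_sub_one_of_lt i.isLt)).trans_lt
      (Nat.count_strict_mono (mem_insert_self _ _) (Nat.sub_one_lt_of_lt i.isLt))
  have hcast : ℓ ∘ Fin.castSucc = fun i : Fin n => Nat.count (· ∈ S) i :=
    funext fun i => count_mem_insert_pred S i.isLt
  (subtypeEquivRight fun σ => by rw [descSet_subset_iff, ← hcast]).trans <|
    (standardizationEquiv (hℓ.comp (Fin.strictMono_castSucc (n := n)).monotone)).trans <|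
      (wordCycleEquiv hℓ hmax).trans <| subtypeEquivRight fun ρ => by
        rw [descSet_inter_range_subset_iff, descSet_subset_iff]

end Levels

theorem stmt0 (n : ℕ) :
    ∃ φ : {π : Equiv.Perm (Fin (n + 1)) // IsCyclic' π} ≃ Equiv.Perm (Fin n),
      ∀ π : {π : Equiv.Perm (Fin (n + 1)) // IsCyclic' π},
        descSet π.1 ∩ Finset.range (n - 1) = descSet (φ π) := by
  obtain ⟨φ, hφ⟩ := exists_equiv_of_natCard_subset_eq
    (f := fun π : {π : Perm (Fin (n + 1)) // IsCyclic' π} => descSet π.1 ∩ range (n - 1))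
    (g := descSet) fun S => Nat.card_congr <|
      (subtypeSubtypeEquivSubtypeInter _ (descSet · ∩ range (n - 1) ⊆ S)).trans
        (descSubsetEquiv S).symm
  exact ⟨φ, fun π => (hφ π).symm⟩
end

section
/- If a uniformly random permutation π of {1,...,n+1} is chosen, then for any fixed I ⊆ {1,...,n−1}, the events {D(π) ∩ {1,...,n−1} = I} and {π is a single (n+1)-cycle} are independent. Equivalently, (n+1)·|{π cyclic in S_{n+1} : D(π)∩[n−1]=I}| = |{π ∈ S_{n+1} : D(π)∩[n−1]=I}|. -/
/-!
Cut the positions `0, …, n` into blocks after every element of `S ∪ {n - 1}` and let `c p` be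
the index of the block of `p`. A permutation has its descents in `[n - 1]` inside `S` iff it
increases on every block, and such permutations correspond to the rearrangements of the word `c`
(`π ↦ c ∘ π⁻¹`, inverted by sorting). The cut at `n - 1` makes the last block a singleton, so
the largest letter of such a word `g` occurs exactly once and the `n + 1` rotations of the
circular word `g` are pairwise distinct. Ranking them lexicographically gives a permutation `e`,
and `e ∘ (· + 1) ∘ e⁻¹` is an `(n + 1)`-cycle increasing on every block (Gessel–Reutenauer);
`g` is recovered from this cycle and the position of its largest letter. Hence
`#{D ∩ [n - 1] ⊆ S} = (n + 1) · #{cyclic, D ∩ [n - 1] ⊆ S}` for every `S ⊆ [n - 1]`, and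
Möbius inversion on the subsets of `[n - 1]` turns this into the statement.
-/

open Finset Equiv Function
open scoped Fin.CommRing

theorem Tuple.sort_symm_lt_sort_symm_iff {n : ℕ} {α : Type*} [LinearOrder α] {f : Fin n → α}
    (hf : Injective f) {a b : Fin n} : (sort f).symm a < (sort f).symm b ↔ f a < f b := by
  have hmono : StrictMono (f ∘ sort f) :=
    (monotone_sort f).strictMono_of_injective (hf.comp (sort f).injective)
  simpa using (hmono.lt_iff_lt (a := (sort f).symm a) (b := (sort f).symm b)).symm

theorem Equiv.Perm.eq_of_lt_iff_lt {α : Type*} [LinearOrder α] [Finite α] {e₁ e₂ : Perm α}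
    (h : ∀ a b, e₁ a < e₁ b ↔ e₂ a < e₂ b) : e₁ = e₂ := by
  have hmono : StrictMono (e₂ ∘ e₁.symm) := fun x y hxy => (h _ _).1 (by simpa using hxy)
  ext a
  simpa using (hmono.apply_eq (x := e₁ a)).symm

theorem Finset.eq_of_sum_powerset_eq {α M : Type*} [DecidableEq α] [AddCancelCommMonoid M]
    {F G : Finset α → M} {U : Finset α}
    (h : ∀ S ⊆ U, ∑ K ∈ S.powerset, F K = ∑ K ∈ S.powerset, G K) {I : Finset α}
    (hI : I ⊆ U) : F I = G I := by
  induction I using Finset.strongInduction with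
  | _ I ih =>
  have hrest : ∑ K ∈ I.powerset.erase I, F K = ∑ K ∈ I.powerset.erase I, G K := by
    refine sum_congr rfl fun K hK => ?_
    obtain ⟨hne, hsub⟩ : K ≠ I ∧ K ⊆ I := by simpa using hK
    exact ih K (ssubset_of_subset_of_ne hsub hne) (hsub.trans hI)
  have hI' := h I hI
  rw [← add_sum_erase _ _ (mem_powerset_self I), ← add_sum_erase _ _ (mem_powerset_self I),
    hrest] at hI'
  exact add_right_cancel hI'

theorem Nat.card_subtype_subset_eq_sum {α β : Type*} [Fintype α] (p : α → Prop)
    (f : α → Finset β) (S : Finset β) :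
    Nat.card {x // p x ∧ f x ⊆ S} = ∑ K ∈ S.powerset, Nat.card {x // p x ∧ f x = K} := by
  classical
  simp only [Nat.card_eq_fintype_card, Fintype.card_subtype]
  rw [card_eq_sum_card_fiberwise (f := f) (t := S.powerset)
    fun x hx => mem_powerset.2 (mem_filter.1 hx).2.2]
  refine sum_congr rfl fun K hK => congrArg card (ext fun x => ?_)
  simp only [mem_filter, mem_univ, true_and]
  exact ⟨fun ⟨⟨hp, _⟩, hK⟩ => ⟨hp, hK⟩,
    fun ⟨hp, hfK⟩ => ⟨⟨hp, hfK ▸ mem_powerset.1 hK⟩, hfK⟩⟩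

section Necklaces

variable {N : ℕ}

def IncreasingOnBlocks (c : Fin N → ℕ) (π : Perm (Fin N)) : Prop :=
  ∀ i j, i < j → c i = c j → π i < π j

theorem IncreasingOnBlocks.lt_iff_lt {c : Fin N → ℕ} {π : Perm (Fin N)}
    (hπ : IncreasingOnBlocks c π) {i j : Fin N} (hij : c i = c j) : π i < π j ↔ i < j := by
  refine ⟨fun hlt => ?_, fun hlt => hπ i j hlt hij⟩
  rcases lt_trichotomy i j with h | rfl | h
  · exact h
  · exact absurd hlt (lt_irrefl _)
  · exact absurd (hπ j i h hij.symm) hlt.asymm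

def rearrangements (c : Fin N → ℕ) : Set (Fin N → ℕ) :=
  Set.range fun σ : Perm (Fin N) => c ∘ σ

variable {c g : Fin N → ℕ}

theorem comp_eq_of_mem_rearrangements (hc : Monotone c) (hg : g ∈ rearrangements c)
    {τ : Perm (Fin N)} (hτ : Monotone (g ∘ τ)) : g ∘ τ = c := by
  obtain ⟨σ, rfl⟩ := hg
  simpa [comp_assoc] using Tuple.unique_monotone (f := c) (σ := σ * τ) (τ := 1) hτ hc

theorem comp_sort_eq_of_mem_rearrangements (hc : Monotone c) (hg : g ∈ rearrangements c) :
    g ∘ Tuple.sort g = c :=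
  comp_eq_of_mem_rearrangements hc hg (Tuple.monotone_sort g)

theorem IncreasingOnBlocks.sort_comp_symm (hc : Monotone c) {π : Perm (Fin N)}
    (hπ : IncreasingOnBlocks c π) : Tuple.sort (c ∘ π.symm) = π :=
  (Tuple.eq_sort_iff.2 ⟨by simpa [comp_assoc] using hc,
    fun i j hij h => hπ i j hij (by simpa using h)⟩).symm

theorem increasingOnBlocks_sort (hc : Monotone c) (hg : g ∈ rearrangements c) :
    IncreasingOnBlocks c (Tuple.sort g) := by
  intro i j hij hcij
  rw [← comp_sort_eq_of_mem_rearrangements hc hg] at hcij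
  exact (Tuple.eq_sort_iff.1 rfl).2 i j hij hcij

noncomputable def increasingOnBlocksEquiv (hc : Monotone c) :
    {π : Perm (Fin N) // IncreasingOnBlocks c π} ≃ rearrangements c where
  toFun π := ⟨c ∘ π.1.symm, π.1.symm, rfl⟩
  invFun g := ⟨Tuple.sort g.1, increasingOnBlocks_sort hc g.2⟩
  left_inv π := Subtype.ext (π.2.sort_comp_symm hc)
  right_inv g := Subtype.ext <| funext fun x => by
    have := congrFun (comp_sort_eq_of_mem_rearrangements hc g.2) ((Tuple.sort g.1).symm x)
    simpa using this.symm

theorem exists_top_of_mem_rearrangements {t : Fin N} (ht : ∀ p ≠ t, c p < c t)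
    (hg : g ∈ rearrangements c) : ∃ s, ∀ b ≠ s, g b < g s := by
  obtain ⟨σ, rfl⟩ := hg
  exact ⟨σ.symm t, fun b hb => by simpa using ht (σ b) (by simpa [eq_symm_apply] using hb)⟩

theorem IsCyclic'.pow_card_eq_one {π : Perm (Fin N)} (hπ : IsCyclic' π) : π ^ N = 1 := by
  ext x
  have hper : 0 < minimalPeriod π x :=
    minimalPeriod_pos_of_mem_periodicPts (π.injective.mem_periodicPts x)
  have hsurj : Surjective fun j : Fin (minimalPeriod π x) => π^[j] x := by
    intro y
    obtain ⟨k, rfl⟩ := hπ x y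
    exact ⟨⟨k % _, Nat.mod_lt _ hper⟩,
      by simp [iterate_mod_minimalPeriod_eq, Perm.iterate_eq_pow]⟩
  have hN : minimalPeriod π x = N :=
    le_antisymm (by simpa using minimalPeriod_le_card (f := π) (x := x))
      (by simpa using Fintype.card_le_of_surjective _ hsurj)
  have h := iterate_minimalPeriod (f := π) (x := x)
  rw [hN, Perm.iterate_eq_pow] at h
  rw [h, Perm.one_apply]

variable [NeZero N]

/-- Rotations are compared as infinite periodic words, so that moving the starting point by one
is a shift of the index. -/
def rotationWord (g : Fin N → ℕ) (b : Fin N) : Lex (ℕ → ℕ) :=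
  toLex fun k => g (b + k)

theorem rotationWord_lt_of_lt {a b : Fin N} (h : g a < g b) :
    rotationWord g a < rotationWord g b :=
  ⟨0, fun _ hj => absurd hj (Nat.not_lt_zero _), by simpa [rotationWord] using h⟩

theorem rotationWord_lt_iff_of_eq {a b : Fin N} (h : g a = g b) :
    rotationWord g a < rotationWord g b ↔ rotationWord g (a + 1) < rotationWord g (b + 1) := by
  have hshift (x : Fin N) (j : ℕ) : x + 1 + (j : Fin N) = x + ((j + 1 : ℕ) : Fin N) := by
    push_cast; ring
  simp only [rotationWord, hshift]
  constructor
  · rintro ⟨_ | i, hi, hlt⟩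
    · exact absurd (by simpa using hlt) h.not_lt
    · exact ⟨i, fun j hj => hi (j + 1) (by omega), hlt⟩
  · rintro ⟨i, hi, hlt⟩
    refine ⟨i + 1, fun j hj => ?_, hlt⟩
    rcases j with _ | j
    · simpa using h
    · exact hi j (by omega)

theorem rotationWord_injective {s : Fin N} (hs : ∀ b ≠ s, g b < g s) :
    Injective (rotationWord g) := by
  intro a b hab
  have h := congrFun hab (s - a).val
  simp only [rotationWord, Pi.toLex_apply, Fin.cast_val_eq_self, add_sub_cancel] at h
  by_contra hne
  have : b + (s - a) ≠ s := fun h' => hne (by linear_combination -h')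
  exact (hs _ this).ne h.symm

noncomputable def rotationRank (g : Fin N → ℕ) : Perm (Fin N) :=
  (Tuple.sort (rotationWord g)).symm

structure IsRotationRank (g : Fin N → ℕ) (e : Perm (Fin N)) : Prop where
  lt_of_lt {a b : Fin N} : g a < g b → e a < e b
  lt_iff_add_one {a b : Fin N} : g a = g b → (e a < e b ↔ e (a + 1) < e (b + 1))

theorem isRotationRank_rotationRank {s : Fin N} (hs : ∀ b ≠ s, g b < g s) :
    IsRotationRank g (rotationRank g) := by
  have hlt (a b : Fin N) :=
    Tuple.sort_symm_lt_sort_symm_iff (rotationWord_injective hs) (a := a) (b := b)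
  refine ⟨fun h => (hlt _ _).2 (rotationWord_lt_of_lt h), fun h => ?_⟩
  rw [rotationRank, hlt, hlt]
  exact rotationWord_lt_iff_of_eq h

theorem isRotationRank_rotationRank_of_mem {t : Fin N} (ht : ∀ p ≠ t, c p < c t)
    (hg : g ∈ rearrangements c) : IsRotationRank g (rotationRank g) :=
  have ⟨_, hs⟩ := exists_top_of_mem_rearrangements ht hg
  isRotationRank_rotationRank hs

/-- Comparing two positions carrying the same letter reduces to comparing their successors; this
descent ends because the largest letter occurs only at `s`. -/
theorem IsRotationRank.lt_iff_lt {e₁ e₂ : Perm (Fin N)} {s : Fin N}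
    (hs : ∀ b ≠ s, g b < g s) (h₁ : IsRotationRank g e₁) (h₂ : IsRotationRank g e₂)
    (a b : Fin N) : e₁ a < e₁ b ↔ e₂ a < e₂ b := by
  induction hk : (s - a).val using Nat.strong_induction_on generalizing a b with
  | _ k ih =>
  rcases lt_trichotomy (g a) (g b) with hab | hab | hab
  · exact iff_of_true (h₁.lt_of_lt hab) (h₂.lt_of_lt hab)
  · rcases eq_or_ne a b with rfl | hne
    · simp
    have has : s - a ≠ 0 := by
      rw [Ne, sub_eq_zero]
      rintro rfl
      exact (hs b hne.symm).ne' hab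
    rw [h₁.lt_iff_add_one hab, h₂.lt_iff_add_one hab]
    refine ih _ ?_ (a + 1) (b + 1) rfl
    rw [← hk, show s - (a + 1) = s - a - 1 by ring, Fin.val_sub_one_of_ne_zero has]
    exact Nat.sub_lt (Nat.pos_of_ne_zero (Fin.val_ne_zero_iff.2 has)) one_pos
  · exact iff_of_false (h₁.lt_of_lt hab).asymm (h₂.lt_of_lt hab).asymm

theorem IsRotationRank.eq {e₁ e₂ : Perm (Fin N)} {s : Fin N} (hs : ∀ b ≠ s, g b < g s)
    (h₁ : IsRotationRank g e₁) (h₂ : IsRotationRank g e₂) : e₁ = e₂ :=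
  Perm.eq_of_lt_iff_lt (h₁.lt_iff_lt hs h₂)

theorem IsRotationRank.comp_eq {e : Perm (Fin N)} (he : IsRotationRank g e) (hc : Monotone c)
    (hg : g ∈ rearrangements c) : c ∘ e = g := by
  have hmono : Monotone (g ∘ e.symm) := fun i j hij =>
    not_lt.1 fun hlt => (by simpa using he.lt_of_lt hlt : j < i).not_ge hij
  ext a
  simpa using (congrFun (comp_eq_of_mem_rearrangements hc hg hmono) (e a)).symm

theorem IsRotationRank.increasingOnBlocks_conj {e : Perm (Fin N)} (he : IsRotationRank g e)
    (hce : c ∘ e = g) : IncreasingOnBlocks c (e * finRotate N * e⁻¹) := by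
  intro i j hij hcij
  have hg : g (e⁻¹ i) = g (e⁻¹ j) := by simpa [← hce] using hcij
  simpa [finRotate_apply] using (he.lt_iff_add_one hg).1 (by simpa using hij)

theorem IsCyclic'.pow_val_natCast {π : Perm (Fin N)} (hπ : IsCyclic' π) (k : ℕ) :
    π ^ (k : Fin N).val = π ^ k := by
  rw [Fin.val_natCast, ← pow_eq_pow_mod k hπ.pow_card_eq_one]

theorem conj_finRotate_pow_apply (e : Perm (Fin N)) (k : ℕ) (x : Fin N) :
    ((e * finRotate N * e⁻¹) ^ k) x = e (e⁻¹ x + k) := by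
  induction k with
  | zero => simp
  | succ k ih =>
    rw [pow_succ', Perm.mul_apply, ih]
    simp only [Perm.mul_apply, Perm.coe_inv, symm_apply_apply, finRotate_apply, Nat.cast_succ]
    ring_nf

theorem isCyclic'_conj_finRotate (e : Perm (Fin N)) : IsCyclic' (e * finRotate N * e⁻¹) :=
  fun x y => ⟨(e⁻¹ y - e⁻¹ x).val, by rw [conj_finRotate_pow_apply]; simp⟩

def orbitMap (π : Perm (Fin N)) (s t b : Fin N) : Fin N := (π ^ (b - s).val) t

theorem orbitMap_self (π : Perm (Fin N)) (s t : Fin N) : orbitMap π s t s = t := by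
  simp [orbitMap]

theorem orbitMap_conj_finRotate (e : Perm (Fin N)) (t : Fin N) :
    orbitMap (e * finRotate N * e⁻¹) (e⁻¹ t) t = e := by
  ext b
  rw [orbitMap, conj_finRotate_pow_apply]
  simp

theorem IsCyclic'.orbitMap_add_one {π : Perm (Fin N)} (hπ : IsCyclic' π) (s t b : Fin N) :
    orbitMap π s t (b + 1) = π (orbitMap π s t b) := by
  have : b + 1 - s = (((b - s).val + 1 : ℕ) : Fin N) := by push_cast; ring
  rw [orbitMap, this, hπ.pow_val_natCast, pow_succ', Perm.mul_apply, orbitMap]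

theorem IsCyclic'.orbitMap_bijective {π : Perm (Fin N)} (hπ : IsCyclic' π) (s t : Fin N) :
    Bijective (orbitMap π s t) := by
  refine Finite.surjective_iff_bijective.1 fun y => ?_
  obtain ⟨k, rfl⟩ := hπ t y
  exact ⟨s + k, by rw [orbitMap, add_sub_cancel_left, hπ.pow_val_natCast]⟩

noncomputable def IsCyclic'.orbitEquiv {π : Perm (Fin N)} (hπ : IsCyclic' π) (s t : Fin N) :
    Perm (Fin N) :=
  Equiv.ofBijective _ (hπ.orbitMap_bijective s t)

theorem IsCyclic'.orbitEquiv_apply {π : Perm (Fin N)} (hπ : IsCyclic' π) (s t b : Fin N) :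
    hπ.orbitEquiv s t b = orbitMap π s t b := rfl

theorem IsCyclic'.conj_orbitEquiv {π : Perm (Fin N)} (hπ : IsCyclic' π) (s t : Fin N) :
    hπ.orbitEquiv s t * finRotate N * (hπ.orbitEquiv s t)⁻¹ = π := by
  ext x
  have := hπ.orbitMap_add_one s t ((hπ.orbitEquiv s t)⁻¹ x)
  simp only [Perm.mul_apply, finRotate_apply, ← hπ.orbitEquiv_apply] at this ⊢
  rw [this]
  simp

theorem IsCyclic'.isRotationRank_orbitEquiv {π : Perm (Fin N)} (hπ : IsCyclic' π)
    (hc : Monotone c) (hinc : IncreasingOnBlocks c π) (s t : Fin N) :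
    IsRotationRank (c ∘ hπ.orbitEquiv s t) (hπ.orbitEquiv s t) where
  lt_of_lt h := hc.reflect_lt h
  lt_iff_add_one h := by
    simp only [hπ.orbitEquiv_apply, hπ.orbitMap_add_one]
    exact (hinc.lt_iff_lt h).symm

variable {t : Fin N}

theorem IsCyclic'.rotationRank_comp_orbitEquiv (ht : ∀ p ≠ t, c p < c t) {π : Perm (Fin N)}
    (hπ : IsCyclic' π) (hc : Monotone c) (hinc : IncreasingOnBlocks c π) (s : Fin N) :
    rotationRank (c ∘ hπ.orbitEquiv s t) = hπ.orbitEquiv s t := by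
  have hu : hπ.orbitEquiv s t s = t := orbitMap_self π s t
  have hs : ∀ b ≠ s, (c ∘ hπ.orbitEquiv s t) b < (c ∘ hπ.orbitEquiv s t) s := by
    intro b hb
    simp only [comp_apply, hu]
    exact ht _ fun h => hb ((hπ.orbitEquiv s t).injective (h.trans hu.symm))
  exact (isRotationRank_rotationRank hs).eq hs (hπ.isRotationRank_orbitEquiv hc hinc s t)

noncomputable def necklaceEquiv (hc : Monotone c) (ht : ∀ p ≠ t, c p < c t) :
    rearrangements c ≃
      Fin N × {π : Perm (Fin N) // IsCyclic' π ∧ IncreasingOnBlocks c π} where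
  toFun g := ((rotationRank g.1)⁻¹ t, ⟨_, isCyclic'_conj_finRotate _,
    (isRotationRank_rotationRank_of_mem ht g.2).increasingOnBlocks_conj
      ((isRotationRank_rotationRank_of_mem ht g.2).comp_eq hc g.2)⟩)
  invFun x := ⟨c ∘ x.2.2.1.orbitEquiv x.1 t, _, rfl⟩
  left_inv g := Subtype.ext <| by
    change c ∘ orbitMap _ _ t = g.1
    rw [orbitMap_conj_finRotate, (isRotationRank_rotationRank_of_mem ht g.2).comp_eq hc g.2]
  right_inv := by
    rintro ⟨s, π, hπ, hinc⟩
    have hrank := hπ.rotationRank_comp_orbitEquiv ht hc hinc s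
    refine Prod.ext ?_ (Subtype.ext ?_)
    · simp only [hrank]
      exact Perm.inv_eq_iff_eq.2 (orbitMap_self π s t).symm
    · simp only [hrank]
      exact hπ.conj_orbitEquiv s t

theorem card_increasingOnBlocks (hc : Monotone c) (ht : ∀ p ≠ t, c p < c t) :
    Nat.card {π : Perm (Fin N) // IncreasingOnBlocks c π}
      = N * Nat.card {π : Perm (Fin N) // IsCyclic' π ∧ IncreasingOnBlocks c π} := by
  rw [Nat.card_congr ((increasingOnBlocksEquiv hc).trans (necklaceEquiv hc ht)), Nat.card_prod,
    Nat.card_eq_fintype_card (α := Fin N), Fintype.card_fin]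

end Necklaces

section Descents

variable {n : ℕ}

theorem increasingOnBlocks_iff_castSucc_lt_succ {c : Fin (n + 1) → ℕ} (hc : Monotone c)
    {π : Perm (Fin (n + 1))} :
    IncreasingOnBlocks c π ↔
      ∀ i : Fin n, c i.castSucc = c i.succ → π i.castSucc < π i.succ := by
  refine ⟨fun h i hi => h _ _ i.castSucc_lt_succ hi, fun h i j hij hcij => ?_⟩
  have hmono : StrictMonoOn π {k | c k = c i} := by
    refine strictMonoOn_of_lt_succ (Set.ordConnected_singleton.preimage_mono hc) ?_
    intro a ha hai hsa
    obtain ⟨a, rfl⟩ := Fin.exists_castSucc_eq.2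
      (show a ≠ Fin.last n from fun h => ha (h ▸ isMax_iff_eq_top.2 rfl))
    rw [Fin.orderSucc_castSucc] at hsa ⊢
    exact h a (hai.trans hsa.symm)
  exact hmono rfl hcij.symm hij

def blockIndex (T : Finset ℕ) (p : Fin (n + 1)) : ℕ := #(T ∩ range p)

theorem blockIndex_monotone (T : Finset ℕ) : Monotone (blockIndex (n := n) T) := fun _ _ h =>
  card_le_card (inter_subset_inter_left (range_subset_range.2 h))

theorem blockIndex_castSucc_eq_succ_iff (T : Finset ℕ) (i : Fin n) :
    blockIndex T i.castSucc = blockIndex T i.succ ↔ (i : ℕ) ∉ T := by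
  by_cases hi : (i : ℕ) ∈ T <;>
    simp [blockIndex, range_add_one, hi, inter_insert_of_mem, inter_insert_of_notMem]

theorem blockIndex_lt_last {T : Finset ℕ} (hT : n - 1 ∈ T) {p : Fin (n + 1)}
    (hp : p ≠ Fin.last n) : blockIndex T p < blockIndex T (Fin.last n) := by
  have hpn : (p : ℕ) < n := Fin.val_lt_last hp
  refine card_lt_card ((ssubset_iff_of_subset ?_).2 ⟨n - 1, ?_, ?_⟩)
  · exact inter_subset_inter_left (range_subset_range.2 hpn.le)
  · exact mem_inter.2 ⟨hT, mem_range.2 (by rw [Fin.val_last]; omega)⟩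
  · exact fun h => absurd (mem_range.1 (mem_inter.1 h).2) (by omega)

theorem mem_descSet_iff {π : Perm (Fin (n + 1))} {i : ℕ} :
    i ∈ descSet π ↔ ∃ h : i < n, π (Fin.succ ⟨i, h⟩) < π (Fin.castSucc ⟨i, h⟩) := by
  simp only [descSet, descSeq, mem_filter, mem_range]
  constructor
  · rintro ⟨hi, _, hlt⟩
    exact ⟨by omega, hlt⟩
  · rintro ⟨hi, hlt⟩
    exact ⟨by omega, by omega, hlt⟩

/-- Descents at position `n - 1` are not constrained, so `n - 1` is always a cut; this makes the
last block a singleton. -/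
theorem descSet_inter_subset_iff (S : Finset ℕ) (π : Perm (Fin (n + 1))) :
    descSet π ∩ range (n - 1) ⊆ S ↔
      IncreasingOnBlocks (blockIndex (insert (n - 1) S)) π := by
  rw [increasingOnBlocks_iff_castSucc_lt_succ (blockIndex_monotone _)]
  simp only [blockIndex_castSucc_eq_succ_iff, mem_insert, not_or]
  constructor
  · rintro h i ⟨hin, hiS⟩
    by_contra hlt
    have hdesc : π i.succ < π i.castSucc :=
      lt_of_le_of_ne (not_lt.1 hlt) (π.injective.ne i.castSucc_lt_succ.ne')
    exact hiS (h (mem_inter.2 ⟨mem_descSet_iff.2 ⟨i.isLt, hdesc⟩, mem_range.2 (by omega)⟩))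
  · intro h x hx
    obtain ⟨hxD, hxn⟩ := mem_inter.1 hx
    obtain ⟨hxn', hdesc⟩ := mem_descSet_iff.1 hxD
    by_contra hxS
    exact (h ⟨x, hxn'⟩ ⟨(mem_range.1 hxn).ne, hxS⟩).asymm hdesc

theorem card_descSet_inter_subset (S : Finset ℕ) :
    Nat.card {π : Perm (Fin (n + 1)) // descSet π ∩ range (n - 1) ⊆ S}
      = (n + 1) * Nat.card {π : Perm (Fin (n + 1)) //
          IsCyclic' π ∧ descSet π ∩ range (n - 1) ⊆ S} := by
  simp only [descSet_inter_subset_iff]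
  exact card_increasingOnBlocks (blockIndex_monotone _)
    fun _ => blockIndex_lt_last (mem_insert_self _ _)

end Descents

theorem stmt4 (n : ℕ) (I : Finset ℕ) (hI : I ⊆ Finset.range (n - 1)) :
    (n + 1) * Nat.card {π : Equiv.Perm (Fin (n + 1)) //
        IsCyclic' π ∧ descSet π ∩ Finset.range (n - 1) = I}
      = Nat.card {π : Equiv.Perm (Fin (n + 1)) //
          descSet π ∩ Finset.range (n - 1) = I} := by
  refine (Finset.eq_of_sum_powerset_eq
    (F := fun K => Nat.card {π : Perm (Fin (n + 1)) // descSet π ∩ range (n - 1) = K})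
    (G := fun K => (n + 1) * Nat.card {π : Perm (Fin (n + 1)) //
      IsCyclic' π ∧ descSet π ∩ range (n - 1) = K}) (fun S _ => ?_) hI).symm
  have hall := Nat.card_subtype_subset_eq_sum (fun _ : Perm (Fin (n + 1)) => True)
    (fun π => descSet π ∩ range (n - 1)) S
  simp only [true_and] at hall
  rw [← hall, card_descSet_inter_subset, Nat.card_subtype_subset_eq_sum, mul_sum]
end

section
/- For any two subsets I, J ⊆ {1,...,n−1} whose associated compositions of n have the same multiset of parts, and for every partition λ of n, the number of permutations of {1,...,n} with cycle type λ and descent set contained in I equals the number of permutations with cycle type λ and descent set contained in J. -/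
/-
Gessel–Reutenauer. A permutation `σ` has its descents in `I` iff the monotone word
`w_I = 0^{a₁} 1^{a₂} ⋯` of the composition `(a₁, a₂, …)` of `I` strictly increases at every
descent of `σ`; call such a pair `(σ, w)` compatible. Along each cycle of `σ` a compatible word
reads a primitive necklace, and conversely every labelling whose cycle words are primitive is,
after renaming the points, conjugate to exactly one compatible pair: sort the points by their
infinite cycle words. Renaming the letters by a bijection `ρ` of `ℕ` preserves primitivity,
conjugacy and the cycle type, so it matches the compatible pairs with letter multiset `M` with
those with letter multiset `ρ(M)`. Rearranging the parts of a composition is such a renaming of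
the letters of `w_I`.
-/

open Equiv Finset

lemma StrictMonoOn.eqOn_of_image_eq {α β : Type*} [LinearOrder α] [WellFoundedLT α]
    [Preorder β] {f g : α → β} {s : Set α} (hf : StrictMonoOn f s) (hg : StrictMonoOn g s)
    (h : f '' s = g '' s) : s.EqOn f g := by
  rw [← Set.domRestrict_eq_domRestrict_iff, ← hf.domRestrict.range_inj hg.domRestrict,
    Set.range_domRestrict, Set.range_domRestrict, h]

namespace GesselReutenauer

variable {n : ℕ}

section CycleWord

def cycleWord (σ : Perm (Fin n)) (v : Fin n → ℕ) (x : Fin n) : ℕ → ℕ :=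
  fun t => v ((σ ^ t) x)

variable {σ : Perm (Fin n)} {v : Fin n → ℕ}

@[simp]
lemma cycleWord_zero (x : Fin n) : cycleWord σ v x 0 = v x := rfl

lemma cycleWord_pow_apply (k : ℕ) (x : Fin n) :
    cycleWord σ v ((σ ^ k) x) = fun t => cycleWord σ v x (t + k) := by
  funext t
  simp only [cycleWord, ← Perm.mul_apply, ← pow_add]

lemma cycleWord_apply (x : Fin n) :
    cycleWord σ v (σ x) = fun t => cycleWord σ v x (t + 1) := by
  simpa using cycleWord_pow_apply (σ := σ) (v := v) 1 x

lemma cycleWord_apply_eq_iff {x y : Fin n} :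
    cycleWord σ v (σ x) = cycleWord σ v (σ y) ↔ cycleWord σ v x = cycleWord σ v y := by
  refine ⟨fun h => ?_, fun h => by rw [cycleWord_apply, cycleWord_apply, h]⟩
  have hback : ∀ z, (σ ^ (orderOf σ - 1)) (σ z) = z := fun z => by
    rw [← Perm.mul_apply, ← pow_succ, Nat.sub_add_cancel (orderOf_pos σ), pow_orderOf_eq_one,
      Perm.one_apply]
  rw [← hback x, ← hback y, cycleWord_pow_apply, cycleWord_pow_apply, h]

lemma image_setOf_cycleWord_eq (x : Fin n) :
    σ '' {z | cycleWord σ v z = cycleWord σ v x} =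
      {z | cycleWord σ v z = cycleWord σ v (σ x)} := by
  ext z
  rw [Equiv.image_eq_preimage_symm, Set.mem_preimage, Set.mem_ofPred_eq, Set.mem_ofPred_eq,
    ← cycleWord_apply_eq_iff, Equiv.apply_symm_apply]

lemma cycleWord_conj (g : Perm (Fin n)) (w : Fin n → ℕ) (x : Fin n) :
    cycleWord (g * σ * g⁻¹) w (g x) = cycleWord σ (w ∘ g) x := by
  funext t
  simp [cycleWord, conj_pow]

end CycleWord

/-- Every cycle of `σ`, read through `v`, is a primitive necklace. -/
def Aperiodic (σ : Perm (Fin n)) (v : Fin n → ℕ) : Prop :=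
  ∀ ⦃x y⦄, σ.SameCycle x y → cycleWord σ v x = cycleWord σ v y → x = y

lemma Aperiodic.comp {σ : Perm (Fin n)} {v : Fin n → ℕ} {f : ℕ → ℕ} (hv : Aperiodic σ v)
    (hf : Function.Injective f) : Aperiodic σ (f ∘ v) :=
  fun _ _ hxy hW => hv hxy (hf.comp_left hW)

/-- Equivalently, `w` is weakly increasing and strictly increases at every descent of `σ`. -/
def Compatible (σ : Perm (Fin n)) (w : Fin n → ℕ) : Prop :=
  Monotone w ∧ ∀ ⦃x y⦄, x < y → w x = w y → σ x < σ y

namespace Compatible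

variable {σ : Perm (Fin n)} {w : Fin n → ℕ}

lemma apply_le (h : Compatible σ w) {x y : Fin n} (hxy : x ≤ y) (hw : w x = w y) :
    σ x ≤ σ y := by
  rcases hxy.eq_or_lt with rfl | hlt
  · exact le_rfl
  · exact (h.2 hlt hw).le

lemma cycleWord_le (h : Compatible σ w) :
    ∀ (t : ℕ) {x y : Fin n}, x ≤ y → (∀ s < t, cycleWord σ w x s = cycleWord σ w y s) →
      cycleWord σ w x t ≤ cycleWord σ w y t
  | 0, _, _, hxy, _ => h.1 hxy
  | t + 1, x, y, hxy, heq => by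
    have hσ := h.apply_le hxy (heq 0 t.succ_pos)
    have := h.cycleWord_le t hσ fun s hs => by
      simpa only [cycleWord_apply] using heq (s + 1) (by omega)
    simpa only [cycleWord_apply] using this

lemma monotone_cycleWord (h : Compatible σ w) : Monotone fun x => toLex (cycleWord σ w x) := by
  intro x y hxy
  by_contra hlt
  obtain ⟨t, heq, hgt⟩ := lt_of_not_ge hlt
  exact (h.cycleWord_le t hxy fun s hs => (heq s hs).symm).not_gt hgt

lemma strictMonoOn_setOf_cycleWord_eq (h : Compatible σ w) (x : Fin n) :
    StrictMonoOn σ {z | cycleWord σ w z = cycleWord σ w x} := fun a ha b hb hab =>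
  h.2 hab (by simpa using congrFun (ha.trans hb.symm) 0)

lemma pow_apply_lt (h : Compatible σ w) {x y : Fin n} (hxy : x < y)
    (hW : cycleWord σ w x = cycleWord σ w y) : ∀ k : ℕ, (σ ^ k) x < (σ ^ k) y
  | 0 => hxy
  | k + 1 => by
    rw [pow_succ', Perm.mul_apply, Perm.mul_apply]
    exact h.2 (h.pow_apply_lt hxy hW k) (congrFun hW k)

lemma aperiodic (h : Compatible σ w) : Aperiodic σ w := by
  suffices ∀ ⦃x y⦄, σ.SameCycle x y → cycleWord σ w x = cycleWord σ w y → ¬x < y from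
    fun x y hxy hW => le_antisymm (not_lt.1 (this hxy.symm hW.symm)) (not_lt.1 (this hxy hW))
  intro x y hxy hW hlt
  obtain ⟨m, -, rfl⟩ := hxy.exists_pow_eq'
  have : StrictMono fun k : ℕ => (σ ^ (k * m)) x := strictMono_nat_of_lt_succ fun k => by
    simpa [add_mul, pow_add, Perm.mul_apply] using h.pow_apply_lt hlt hW (k * m)
  exact not_injective_infinite_finite _ this.injective

end Compatible

def IsConjPair (p q : Perm (Fin n) × (Fin n → ℕ)) : Prop :=
  ∃ g : Perm (Fin n), q.1 = g * p.1 * g⁻¹ ∧ p.2 = q.2 ∘ g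

namespace IsConjPair

variable {p q r : Perm (Fin n) × (Fin n → ℕ)}

lemma trans (hpq : IsConjPair p q) (hqr : IsConjPair q r) : IsConjPair p r := by
  obtain ⟨g, hg₁, hg₂⟩ := hpq
  obtain ⟨h, hh₁, hh₂⟩ := hqr
  refine ⟨h * g, by rw [hh₁, hg₁]; group, ?_⟩
  rw [hg₂, hh₂, Perm.coe_mul, Function.comp_assoc]

lemma comp_left (f : ℕ → ℕ) (hpq : IsConjPair p q) :
    IsConjPair (p.1, f ∘ p.2) (q.1, f ∘ q.2) := by
  obtain ⟨g, hg₁, hg₂⟩ := hpq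
  exact ⟨g, hg₁, by rw [hg₂]; rfl⟩

lemma exists_cycleWord_apply_eq (hpq : IsConjPair p q) :
    ∃ g : Perm (Fin n), ∀ x, cycleWord q.1 q.2 (g x) = cycleWord p.1 p.2 x := by
  obtain ⟨g, hg₁, hg₂⟩ := hpq
  exact ⟨g, fun x => by rw [hg₁, hg₂, cycleWord_conj]⟩

lemma fullCycleType_eq (hpq : IsConjPair p q) : fullCycleType q.1 = fullCycleType p.1 := by
  obtain ⟨g, hg, -⟩ := hpq
  have hc : q.1.cycleType = p.1.cycleType := hg ▸ Perm.cycleType_conj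
  rw [fullCycleType, fullCycleType, hc, ← Perm.sum_cycleType, ← Perm.sum_cycleType, hc]

lemma map_univ_val_eq (hpq : IsConjPair p q) : univ.val.map q.2 = univ.val.map p.2 := by
  obtain ⟨g, -, hg⟩ := hpq
  rw [hg, ← Multiset.map_map, Multiset.map_univ_val_equiv]

end IsConjPair

/-- Since the order of positions refines the lexicographic order of their cycle words, a
renaming between compatible pairs preserves all cycle words, hence the words; the permutations
then agree because on each level set of the cycle words both are increasing. -/
theorem Compatible.eq_of_isConjPair {p q : Perm (Fin n) × (Fin n → ℕ)} (hp : Compatible p.1 p.2)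
    (hq : Compatible q.1 q.2) (hpq : IsConjPair p q) : p = q := by
  obtain ⟨g, hg⟩ := hpq.exists_cycleWord_apply_eq
  have hW : cycleWord p.1 p.2 = cycleWord q.1 q.2 := by
    have := Tuple.unique_monotone (f := fun x => toLex (cycleWord q.1 q.2 x)) (σ := g) (τ := 1)
      (by simpa [Function.comp_def, hg] using hp.monotone_cycleWord)
      (by simpa using hq.monotone_cycleWord)
    funext x
    simpa [hg] using congrFun this x
  have hw : p.2 = q.2 := funext fun x => by simpa using congrFun (congrFun hW x) 0
  refine Prod.ext (Perm.ext fun x => ?_) hw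
  have hσx : cycleWord q.1 q.2 (q.1 x) = cycleWord q.1 q.2 (p.1 x) := by
    rw [cycleWord_apply, ← hW, cycleWord_apply]
  refine StrictMonoOn.eqOn_of_image_eq (hp.strictMonoOn_setOf_cycleWord_eq x) ?_ ?_ rfl
  · rw [hW]
    exact hq.strictMonoOn_setOf_cycleWord_eq x
  · rw [image_setOf_cycleWord_eq, hW, image_setOf_cycleWord_eq, hσx]

lemma toLex_apply_zero_le {f g : ℕ → ℕ} (h : toLex f ≤ toLex g) : f 0 ≤ g 0 := by
  rcases h.eq_or_lt with h | ⟨t, heq, hlt⟩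
  · exact (congrFun (toLex_inj.mp h) 0).le
  · cases t with
    | zero => exact hlt.le
    | succ t => exact (heq 0 t.succ_pos).le

lemma toLex_shift_lt {f g : ℕ → ℕ} (h : toLex f < toLex g) (h0 : f 0 = g 0) :
    toLex (fun t => f (t + 1)) < toLex (fun t => g (t + 1)) := by
  obtain ⟨t, heq, hlt⟩ := h
  cases t with
  | zero => exact absurd h0 hlt.ne
  | succ t => exact ⟨t, fun s hs => heq (s + 1) (by omega), hlt⟩

lemma exists_compatible_of_key {β : Type*} [LinearOrder β] (σ : Perm (Fin n)) (v : Fin n → ℕ)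
    (K : Fin n → β) (hK : Function.Injective K) (hv : ∀ x y, K x ≤ K y → v x ≤ v y)
    (hσ : ∀ x y, K x < K y → v x = v y → K (σ x) < K (σ y)) :
    ∃ q, Compatible q.1 q.2 ∧ IsConjPair (σ, v) q := by
  set r := Tuple.sort K
  have hr : StrictMono (K ∘ r) :=
    (Tuple.monotone_sort K).strictMono_of_injective (hK.comp r.injective)
  refine ⟨(r⁻¹ * σ * r, v ∘ r), ⟨fun i j hij => hv _ _ (hr.monotone hij), fun i j hij hvij => ?_⟩,
    r⁻¹, by rw [inv_inv], by funext; simp⟩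
  rw [← hr.lt_iff_lt]
  simpa using hσ _ _ (hr hij) hvij

/-- Key: the cycle word, with ties broken by the smallest point of the cycle. -/
theorem Aperiodic.exists_compatible {σ : Perm (Fin n)} {v : Fin n → ℕ} (h : Aperiodic σ v) :
    ∃ q, Compatible q.1 q.2 ∧ IsConjPair (σ, v) q := by
  classical
  have hne : ∀ x, (univ.filter (σ.SameCycle x)).Nonempty := fun x =>
    ⟨x, mem_filter.2 ⟨mem_univ x, .refl σ x⟩⟩
  let c : Fin n → Fin n := fun x => (univ.filter (σ.SameCycle x)).min' (hne x)
  have hc : ∀ x y, σ.SameCycle x y → c x = c y := fun x y hxy => by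
    simp only [c, fun z => (show σ.SameCycle x z ↔ σ.SameCycle y z from
      ⟨hxy.symm.trans, hxy.trans⟩)]
  have hc_mem : ∀ x, σ.SameCycle x (c x) := fun x => by
    simpa using (univ.filter (σ.SameCycle x)).min'_mem (hne x)
  have hcσ : ∀ x, c (σ x) = c x := fun x => (hc x (σ x) ⟨1, rfl⟩).symm
  refine exists_compatible_of_key σ v (fun x => toLex (toLex (cycleWord σ v x), c x))
    (fun x y hxy => ?_) (fun x y hxy => ?_) (fun x y hxy hv => ?_)
  · obtain ⟨hW, hcxy⟩ := Prod.ext_iff.mp (toLex_inj.mp hxy)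
    have hcxy : c x = c y := hcxy
    exact h ((hc_mem x).trans (hcxy ▸ hc_mem y).symm) (toLex_inj.mp hW)
  · exact toLex_apply_zero_le (Prod.Lex.monotone_fst _ _ hxy)
  · simp only [Prod.Lex.toLex_lt_toLex, cycleWord_apply, hcσ] at hxy ⊢
    rcases hxy with hlt | ⟨hW, hlt⟩
    · exact Or.inl (toLex_shift_lt hlt hv)
    · exact Or.inr ⟨by rw [toLex_inj.mp hW], hlt⟩

section Relabel

def compatiblePairs (n : ℕ) (lam M : Multiset ℕ) : Set (Perm (Fin n) × (Fin n → ℕ)) :=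
  {p | fullCycleType p.1 = lam ∧ Compatible p.1 p.2 ∧ univ.val.map p.2 = M}

noncomputable def relabel (f : ℕ → ℕ) (hf : Function.Injective f)
    (p : Perm (Fin n) × (Fin n → ℕ)) (hp : Compatible p.1 p.2) : Perm (Fin n) × (Fin n → ℕ) :=
  ((hp.aperiodic.comp hf).exists_compatible).choose

variable {f : ℕ → ℕ} {p : Perm (Fin n) × (Fin n → ℕ)}

lemma compatible_relabel (hf : Function.Injective f) (hp : Compatible p.1 p.2) :
    Compatible (relabel f hf p hp).1 (relabel f hf p hp).2 :=
  ((hp.aperiodic.comp hf).exists_compatible).choose_spec.1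

lemma isConjPair_relabel (hf : Function.Injective f) (hp : Compatible p.1 p.2) :
    IsConjPair (p.1, f ∘ p.2) (relabel f hf p hp) :=
  ((hp.aperiodic.comp hf).exists_compatible).choose_spec.2

lemma relabel_mem_compatiblePairs (hf : Function.Injective f) (hp : Compatible p.1 p.2)
    {lam M M' : Multiset ℕ} (hpM : p ∈ compatiblePairs n lam M)
    (hM : M.map f = M') : relabel f hf p hp ∈ compatiblePairs n lam M' := by
  have hconj := isConjPair_relabel hf hp
  refine ⟨hconj.fullCycleType_eq.trans hpM.1, compatible_relabel hf hp, ?_⟩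
  rw [hconj.map_univ_val_eq, ← hM, ← hpM.2.2, Multiset.map_map]

lemma relabel_relabel (hf : Function.Injective f) (hp : Compatible p.1 p.2) {f' : ℕ → ℕ}
    (hf' : Function.Injective f') (hff' : Function.LeftInverse f' f) :
    relabel f' hf' (relabel f hf p hp) (compatible_relabel hf hp) = p := by
  have hconj := (isConjPair_relabel hf hp).comp_left f'
  rw [← Function.comp_assoc, hff'.comp_eq_id, Function.id_comp] at hconj
  exact (hp.eq_of_isConjPair (compatible_relabel hf' _)
    (hconj.trans (isConjPair_relabel hf' _))).symm

theorem card_compatiblePairs_eq_of_map_eq {lam M M' : Multiset ℕ} (ρ : ℕ ≃ ℕ)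
    (hM : M.map ρ = M') :
    Nat.card (compatiblePairs n lam M) = Nat.card (compatiblePairs n lam M') :=
  have hM' : M'.map ρ.symm = M := by
    rw [← hM, Multiset.map_map, ρ.symm_comp_self, Multiset.map_id]
  Nat.card_congr
    { toFun := fun p => ⟨relabel ρ ρ.injective p p.2.2.1,
        relabel_mem_compatiblePairs ρ.injective p.2.2.1 p.2 hM⟩
      invFun := fun p => ⟨relabel ρ.symm ρ.symm.injective p p.2.2.1,
        relabel_mem_compatiblePairs ρ.symm.injective p.2.2.1 p.2 hM'⟩
      left_inv := fun p =>
        Subtype.ext (relabel_relabel ρ.injective p.2.2.1 ρ.symm.injective ρ.left_inv)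
      right_inv := fun p =>
        Subtype.ext (relabel_relabel ρ.symm.injective p.2.2.1 ρ.injective ρ.right_inv) }

end Relabel

/-- The word `0^{a₁} 1^{a₂} ⋯` of the composition `(a₁, a₂, …)` associated with `I`. -/
def descentWord (I : Finset ℕ) (i : Fin n) : ℕ := #{j ∈ I | j < (i : ℕ)}

lemma descentWord_mono (I : Finset ℕ) : Monotone (descentWord (n := n) I) := fun _ _ hij =>
  card_le_card fun j => by simp only [mem_filter]; exact fun h => ⟨h.1, h.2.trans_le hij⟩

lemma notMem_of_descentWord_eq {I : Finset ℕ} {x y : Fin n}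
    (hxy : descentWord I x = descentWord I y) {i : ℕ} (hxi : x.val ≤ i) (hiy : i < y.val) :
    i ∉ I := fun hi => by
  unfold descentWord at hxy
  refine (card_lt_card ((ssubset_iff_of_subset fun j => ?_).2 ⟨i, ?_, ?_⟩)).ne hxy
  · simp only [mem_filter]; exact fun h => ⟨h.1, by omega⟩
  · simp [hi, hiy]
  · simp [hxi]

lemma descentWord_eq_succ {I : Finset ℕ} {i : ℕ} (h : i + 1 < n) (hi : i ∉ I) :
    descentWord I (⟨i, by omega⟩ : Fin n) = descentWord I ⟨i + 1, h⟩ := by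
  unfold descentWord
  congr 1
  refine filter_congr fun j hj => ?_
  have : j ≠ i := fun hji => hi (hji ▸ hj)
  simp only
  omega

lemma apply_lt_apply_succ_of_notMem_descSet {σ : Perm (Fin n)} {i : ℕ} (h : i + 1 < n)
    (hi : i ∉ descSet σ) : σ ⟨i, by omega⟩ < σ ⟨i + 1, h⟩ := by
  simp only [descSet, descSeq, mem_filter, mem_range, not_and, not_exists, not_lt] at hi
  exact Fin.lt_def.2 <|
    (hi (by omega) h).lt_of_ne (Fin.val_injective.ne (σ.injective.ne (by simp)))

lemma apply_lt_of_forall_notMem_descSet {σ : Perm (Fin n)} {x y : Fin n} (hxy : x < y)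
    (h : ∀ i, x.val ≤ i → i < y.val → i ∉ descSet σ) : σ x < σ y := by
  obtain ⟨x, hx⟩ := x
  obtain ⟨y, hy⟩ := y
  simp only [Fin.mk_lt_mk] at hxy h
  revert hy h
  induction y, (hxy : x + 1 ≤ y) using Nat.le_induction with
  | base => exact fun hy h => apply_lt_apply_succ_of_notMem_descSet hy (h x le_rfl (by omega))
  | succ y hxy ih =>
    refine fun hy h => (ih (by omega) fun i hxi hiy => h i hxi (by omega)).trans ?_
    exact apply_lt_apply_succ_of_notMem_descSet hy (h y (by omega) (by omega))

theorem compatible_descentWord_iff (σ : Perm (Fin n)) (I : Finset ℕ) :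
    Compatible σ (descentWord I) ↔ descSet σ ⊆ I := by
  refine ⟨fun h i hi => ?_, fun hI => ⟨descentWord_mono I, fun x y hxy hw =>
    apply_lt_of_forall_notMem_descSet hxy fun i hxi hiy hi =>
      notMem_of_descentWord_eq hw hxi hiy (hI hi)⟩⟩
  simp only [descSet, descSeq, mem_filter, mem_range] at hi
  obtain ⟨-, hi1, hdesc⟩ := hi
  by_contra hiI
  exact lt_asymm hdesc (h.2 (Fin.mk_lt_mk.2 i.lt_succ_self) (descentWord_eq_succ hi1 hiI))

lemma eq_of_monotone_of_map_univ_val_eq {α : Type*} [LinearOrder α] {F F' : Fin n → α}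
    (hF : Monotone F) (hF' : Monotone F') (h : univ.val.map F = univ.val.map F') : F = F' := by
  rw [Fin.univ_val_map, Fin.univ_val_map, Multiset.coe_eq_coe] at h
  exact List.ofFn_injective
    (h.eq_of_sortedLE (List.sortedLE_ofFn_iff.2 hF) (List.sortedLE_ofFn_iff.2 hF'))

theorem card_eq_card_compatiblePairs (I : Finset ℕ) (lam : Multiset ℕ) :
    Nat.card {π : Perm (Fin n) // fullCycleType π = lam ∧ descSet π ⊆ I} =
      Nat.card (compatiblePairs n lam (univ.val.map (descentWord (n := n) I))) := by
  have hword :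
      ∀ p ∈ compatiblePairs n lam (univ.val.map (descentWord I)), p.2 = descentWord I :=
    fun p hp => eq_of_monotone_of_map_univ_val_eq hp.2.1.1 (descentWord_mono I) hp.2.2
  exact Nat.card_congr
    { toFun := fun π =>
        ⟨(π, descentWord I), π.2.1, (compatible_descentWord_iff _ _).2 π.2.2, rfl⟩
      invFun := fun p => ⟨p.1.1, p.2.1, (compatible_descentWord_iff _ _).1 <| by
        simpa only [hword p p.2] using p.2.2.1⟩
      left_inv := fun _ => rfl
      right_inv := fun p => Subtype.ext (Prod.ext rfl (hword p p.2).symm) }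

def blockLetters : ℕ → List ℕ → List ℕ
  | _, [] => []
  | ℓ, k :: L => List.replicate k ℓ ++ blockLetters (ℓ + 1) L

lemma le_of_mem_blockLetters : ∀ {ℓ : ℕ} {L : List ℕ} {i : ℕ}, i ∈ blockLetters ℓ L → ℓ ≤ i
  | _, [], _, h => by simp [blockLetters] at h
  | ℓ, k :: L, i, h => by
    rcases List.mem_append.1 h with h | h
    · exact (List.eq_of_mem_replicate h).ge
    · exact (Nat.le_succ ℓ).trans (le_of_mem_blockLetters h)

/-- Fixing the letters below `ℓ` is what makes the `cons` step work. -/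
lemma exists_equiv_map_blockLetters_perm {L L' : List ℕ} (h : L.Perm L') (ℓ : ℕ) :
    ∃ ρ : ℕ ≃ ℕ, (∀ i < ℓ, ρ i = i) ∧ ((blockLetters ℓ L).map ρ).Perm (blockLetters ℓ L') := by
  induction h generalizing ℓ with
  | nil => exact ⟨Equiv.refl ℕ, fun _ _ => rfl, by simp [blockLetters]⟩
  | cons k _ ih =>
    obtain ⟨ρ, hρ, hperm⟩ := ih (ℓ + 1)
    refine ⟨ρ, fun i hi => hρ i (by omega), ?_⟩
    rw [blockLetters, blockLetters, List.map_append, List.map_replicate, hρ ℓ ℓ.lt_succ_self]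
    exact hperm.append_left _
  | swap k k' L =>
    refine ⟨Equiv.swap ℓ (ℓ + 1), fun i hi => swap_apply_of_ne_of_ne (by omega) (by omega), ?_⟩
    have hfix : (blockLetters (ℓ + 1 + 1) L).map (Equiv.swap ℓ (ℓ + 1)) =
        blockLetters (ℓ + 1 + 1) L := by
      refine (List.map_congr_left fun i hi => ?_).trans (List.map_id _)
      have := le_of_mem_blockLetters hi
      exact swap_apply_of_ne_of_ne (by omega) (by omega)
    simp only [blockLetters, List.map_append, List.map_replicate, swap_apply_left,
      swap_apply_right, hfix, ← List.append_assoc]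
    exact List.perm_append_comm.append_right _
  | trans _ _ ih₁ ih₂ =>
    obtain ⟨ρ₁, hρ₁, h₁⟩ := ih₁ ℓ
    obtain ⟨ρ₂, hρ₂, h₂⟩ := ih₂ ℓ
    refine ⟨ρ₁.trans ρ₂, fun i hi => by simp [hρ₁ i hi, hρ₂ i hi], ?_⟩
    rw [Equiv.coe_trans, ← List.map_map]
    exact (h₁.map ρ₂).trans h₂

/-- The `zipWith` list is the composition of `[a, b)` obtained by cutting after each point of
`s`. -/
lemma map_range'_countP_eq_blockLetters (b : ℕ) :
    ∀ (s : List ℕ) (a ℓ : ℕ), s.Pairwise (· < ·) → (∀ j ∈ s, a ≤ j ∧ j < b) →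
      (List.range' a (b - a)).map (fun i => ℓ + s.countP (· < i)) =
        blockLetters ℓ (List.zipWith (· - ·) (s.map (· + 1) ++ [b]) (a :: s.map (· + 1)))
  | [], a, ℓ, _, _ => by simp [blockLetters]
  | j :: s, a, ℓ, hs, hb => by
    obtain ⟨hj, hs⟩ := List.pairwise_cons.1 hs
    obtain ⟨haj, hjb⟩ := hb j (by simp)
    have ih := map_range'_countP_eq_blockLetters b s (j + 1) (ℓ + 1) hs fun i hi =>
      ⟨hj i hi, (hb i (by simp [hi])).2⟩
    rw [show b - a = (j + 1 - a) + (b - (j + 1)) by omega, ← List.range'_append_1,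
      show a + (j + 1 - a) = j + 1 by omega, List.map_append]
    simp only [List.map_cons, List.cons_append, List.zipWith_cons_cons, blockLetters]
    congr 1
    · refine List.eq_replicate_iff.2 ⟨by simp, fun x hx => ?_⟩
      obtain ⟨i, hi, rfl⟩ := List.mem_map.1 hx
      replace hi := List.mem_range'_1.1 hi
      suffices (j :: s).countP (· < i) = 0 by simp [this]
      refine List.countP_eq_zero.2 fun k hk => ?_
      rcases List.mem_cons.1 hk with rfl | hk
      · simp; omega
      · have := hj k hk; simp; omega
    · rw [← ih]
      refine List.map_congr_left fun i hi => ?_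
      replace hi := List.mem_range'_1.1 hi
      rw [List.countP_cons, if_pos (by simp; omega)]
      omega

lemma map_univ_val_descentWord {I : Finset ℕ} (hI : I ⊆ range (n - 1)) :
    univ.val.map (descentWord (n := n) I) =
      ↑(blockLetters 0 (List.zipWith (· - ·) ((I.sort (· ≤ ·)).map (· + 1) ++ [n])
        (0 :: (I.sort (· ≤ ·)).map (· + 1)))) := by
  have hcount : ∀ i : ℕ, #{j ∈ I | j < i} = (I.sort (· ≤ ·)).countP (· < i) := fun i => by
    rw [card_def, filter_val, ← Multiset.countP_eq_card_filter, ← sort_eq I (· ≤ ·),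
      Multiset.coe_countP]
  rw [Fin.univ_val_map, ← map_range'_countP_eq_blockLetters n _ 0 0 (sortedLT_sort I).pairwise
    fun j hj => ⟨Nat.zero_le j, by have := mem_range.1 (hI ((mem_sort _).1 hj)); omega⟩]
  congr 1
  apply List.ext_getElem <;> simp [descentWord, hcount]

end GesselReutenauer

open GesselReutenauer

theorem stmt10_general (n : ℕ) (I J : Finset ℕ)
    (hI : I ⊆ Finset.range (n - 1)) (hJ : J ⊆ Finset.range (n - 1))
    (h : compParts n I = compParts n J)
    (lam : Multiset ℕ) :
    Nat.card {π : Equiv.Perm (Fin n) // fullCycleType π = lam ∧ descSet π ⊆ I}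
      = Nat.card {π : Equiv.Perm (Fin n) // fullCycleType π = lam ∧ descSet π ⊆ J} := by
  obtain ⟨ρ, -, hρ⟩ := exists_equiv_map_blockLetters_perm (Multiset.coe_eq_coe.mp h) 0
  rw [card_eq_card_compatiblePairs, card_eq_card_compatiblePairs]
  refine card_compatiblePairs_eq_of_map_eq ρ ?_
  rw [map_univ_val_descentWord hI, map_univ_val_descentWord hJ, Multiset.map_coe]
  exact Multiset.coe_eq_coe.mpr hρ

theorem stmt10 (n : ℕ) (I J : Finset ℕ)
    (hI : I ⊆ Finset.range (n - 1)) (hJ : J ⊆ Finset.range (n - 1))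
    (h : compParts n I = compParts n J)
    (lam : Multiset ℕ) (hlam : lam.sum = n) :
    Nat.card {π : Equiv.Perm (Fin n) // fullCycleType π = lam ∧ descSet π ⊆ I}
      = Nat.card {π : Equiv.Perm (Fin n) // fullCycleType π = lam ∧ descSet π ⊆ J} :=
  stmt10_general n I J hI hJ h lam
end

section
/- The map sending τ ∈ U_n (with underlying n-cycle π whose entry π(k) was replaced by n+1) to the (n+1)-cycle π' = (t₁, t₂, ..., t_{n−1}, k, n+1), where π is written in cycle form as (t₁,...,t_{n−1},k) ending in k, is a bijection from U_n to the set of single (n+1)-cycles on {1,...,n+1}, and it satisfies D(τ) = D(π') ∩ {1,...,n−1}. -/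
/-!
Inserting `n + 1` after `k` in the cycle of `π` gives `π' = π · (k n+1)`, i.e. `extCycle π k`.
On `j ≤ n`, `π'` agrees with `π` except that `π' k = n + 1`; so `τ` is the one-line notation of
`π'` with its last entry dropped (values shifted by one, positions and values being 0-based in
`Fin`), and the descents agree below `n - 1`. Conversely `k = π'⁻¹ (n + 1)`, and `π' · (k n+1)`
fixes `n + 1` and restricts to `π`. Cyclicity transfers both ways because `π'` runs through the
cycle of `π`, with one extra stop at `n + 1` right after `k`.
-/

namespace Equiv.Perm

variable {α β : Type*}

theorem SameCycle.map_of_forall_sameCycle_apply {f : Perm α} {g : Perm β} (φ : α → β)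
    (hφ : ∀ x, g.SameCycle (φ x) (φ (f x))) {x y : α} (hxy : f.SameCycle x y) :
    g.SameCycle (φ x) (φ y) := by
  obtain ⟨i, rfl⟩ := hxy
  induction i using Int.induction_on with
  | zero => exact SameCycle.refl _ _
  | succ i ih =>
    rw [add_comm, zpow_one_add, mul_apply]
    exact ih.trans (hφ _)
  | pred i ih =>
    have hf : f ((f ^ (-(i : ℤ) - 1)) x) = (f ^ (-(i : ℤ))) x := by
      rw [← mul_apply, ← zpow_one_add, add_sub_cancel]
    exact ih.trans (hf ▸ hφ _).symm

theorem eq_of_apply_eq_of_ne {σ τ : Perm α} (a : α) (h : ∀ x, x ≠ a → σ x = τ x) :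
    σ = τ := by
  ext x
  by_cases hx : x = a
  · subst hx
    by_contra hne
    have hy : τ.symm (σ x) ≠ x := fun hy => hne (by rw [← τ.apply_symm_apply (σ x), hy])
    exact hy (σ.injective (by rw [h _ hy, apply_symm_apply]))
  · exact h x hx

end Equiv.Perm

open Equiv Equiv.Perm

theorem isCyclic'_iff_sameCycle {n : ℕ} (π : Perm (Fin n)) :
    IsCyclic' π ↔ ∀ x y, π.SameCycle x y :=
  ⟨fun h x y => (h x y).elim fun k hk => ⟨k, by rwa [zpow_natCast]⟩,
    fun h x y => (h x y).exists_nat_pow_eq⟩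

section ExtCycle

variable {n : ℕ}

@[simp]
theorem extPerm_castSucc (π : Perm (Fin n)) (j : Fin n) :
    extPerm π j.castSucc = (π j).castSucc := by
  simp [extPerm, permCongr_apply]

@[simp]
theorem extPerm_last (π : Perm (Fin n)) : extPerm π (Fin.last n) = Fin.last n := by
  simp [extPerm, permCongr_apply]

theorem extPerm_injective : Function.Injective (extPerm (n := n)) :=
  (permCongr _).injective.comp optionCongr_injective

theorem exists_extPerm_eq {τ : Perm (Fin (n + 1))} (hτ : τ (Fin.last n) = Fin.last n) :
    ∃ π, extPerm π = τ := by
  set ρ := finSuccEquivLast.permCongr τ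
  have hρ : ρ none = none := by simp [ρ, permCongr_apply, hτ]
  refine ⟨removeNone ρ, ?_⟩
  rw [extPerm, map_equiv_removeNone, hρ, swap_self, ← Perm.one_def, one_mul, ← permCongr_symm,
    symm_apply_apply]

@[simp]
theorem extCycle_castSucc_self (π : Perm (Fin n)) (k : Fin n) :
    extCycle π k k.castSucc = Fin.last n := by
  simp [extCycle]

theorem extCycle_castSucc_of_ne (π : Perm (Fin n)) {k j : Fin n} (h : j ≠ k) :
    extCycle π k j.castSucc = (π j).castSucc := by
  rw [extCycle, mul_apply, swap_apply_of_ne_of_ne (by simpa using h) (Fin.castSucc_ne_last j),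
    extPerm_castSucc]

@[simp]
theorem extCycle_last (π : Perm (Fin n)) (k : Fin n) :
    extCycle π k (Fin.last n) = (π k).castSucc := by
  simp [extCycle]

theorem extCycle_injective :
    Function.Injective (fun p : Perm (Fin n) × Fin n => extCycle p.1 p.2) := by
  rintro ⟨π, k⟩ ⟨π', k'⟩ h
  dsimp only at h
  obtain rfl : k = k' := by
    by_contra hne
    have := congrArg (· k.castSucc) h
    simp only [extCycle_castSucc_self, extCycle_castSucc_of_ne π' hne] at this
    exact Fin.castSucc_ne_last _ this.symm
  rw [extCycle, extCycle, mul_left_inj] at h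
  rw [extPerm_injective h]

theorem sameCycle_extCycle_castSucc (π : Perm (Fin n)) (k j : Fin n) :
    (extCycle π k).SameCycle j.castSucc (π j).castSucc := by
  rcases eq_or_ne j k with rfl | h
  · rw [← extCycle_last π j, ← extCycle_castSucc_self π j]
    exact sameCycle_apply_right.2 (sameCycle_apply_right.2 (SameCycle.refl _ _))
  · rw [← extCycle_castSucc_of_ne π h]
    exact sameCycle_apply_right.2 (SameCycle.refl _ _)

-- `Fin.lastCases k id` deletes `n + 1` from the cycle of `extCycle π k`, leaving that of `π`.
theorem sameCycle_lastCases_extCycle (π : Perm (Fin n)) (k : Fin n) (x : Fin (n + 1)) :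
    π.SameCycle (Fin.lastCases k id x) (Fin.lastCases k id (extCycle π k x)) := by
  induction x using Fin.lastCases with
  | last => simpa using sameCycle_apply_right.2 (SameCycle.refl _ _)
  | cast j =>
    rcases eq_or_ne j k with rfl | h
    · simpa using SameCycle.refl _ _
    · simpa [extCycle_castSucc_of_ne π h] using sameCycle_apply_right.2 (SameCycle.refl _ _)

theorem isCyclic'_extCycle_iff (π : Perm (Fin n)) (k : Fin n) :
    IsCyclic' (extCycle π k) ↔ IsCyclic' π := by
  simp only [isCyclic'_iff_sameCycle]
  constructor
  · intro h x y
    simpa using (h x.castSucc y.castSucc).map_of_forall_sameCycle_apply _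
      (sameCycle_lastCases_extCycle π k)
  · intro h
    have hcast : ∀ i j : Fin n, (extCycle π k).SameCycle i.castSucc j.castSucc := fun i j =>
      (h i j).map_of_forall_sameCycle_apply _ (sameCycle_extCycle_castSucc π k)
    have hk : ∀ x, (extCycle π k).SameCycle x k.castSucc := Fin.lastCases
      (sameCycle_apply_left.1 (by simpa using hcast (π k) k)) (fun j => hcast j k)
    exact fun x y => (hk x).trans (hk y).symm

theorem exists_extCycle_eq (hn : 1 ≤ n) {σ : Perm (Fin (n + 1))} (hσ : IsCyclic' σ) :
    ∃ π k, extCycle π k = σ := by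
  have hlast : σ⁻¹ (Fin.last n) ≠ Fin.last n := by
    intro h
    obtain ⟨t, ht⟩ := hσ (Fin.last n) (Fin.castSucc ⟨0, hn⟩)
    rw [pow_apply_eq_self_of_apply_eq_self (inv_eq_iff_eq.1 h).symm] at ht
    exact Fin.castSucc_ne_last _ ht.symm
  set k := (σ⁻¹ (Fin.last n)).castPred hlast
  have hk : k.castSucc = σ⁻¹ (Fin.last n) := Fin.castSucc_castPred _ _
  obtain ⟨π, hπ⟩ := exists_extPerm_eq (τ := σ * swap k.castSucc (Fin.last n)) (by
    rw [mul_apply, swap_apply_right, hk]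
    exact σ.apply_symm_apply _)
  exact ⟨π, k, by rw [extCycle, hπ, mul_assoc, swap_mul_self, mul_one]⟩

end ExtCycle

section Descents

variable {n : ℕ}

theorem descSeq_comp_strictMono {g : ℕ → ℕ} (hg : StrictMono g) (f : Fin n → ℕ) :
    descSeq (g ∘ f) = descSeq f := by
  simp only [descSeq, Function.comp_apply, hg.lt_iff_lt]

theorem descSeq_comp_castSucc (f : Fin (n + 1) → ℕ) :
    descSeq (f ∘ Fin.castSucc) = descSeq f ∩ Finset.range (n - 1) := by
  ext i
  simp only [descSeq, Finset.mem_inter, Finset.mem_filter, Finset.mem_range, Function.comp_apply]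
  constructor
  · rintro ⟨hi, _, hlt⟩
    exact ⟨⟨by omega, by omega, hlt⟩, hi⟩
  · rintro ⟨⟨_, _, hlt⟩, hi⟩
    exact ⟨hi, by omega, hlt⟩

theorem update_eq_comp_extCycle (π : Perm (Fin n)) (k : Fin n) :
    Function.update (fun i => ((π i : ℕ) + 1)) k (n + 1)
      = (· + 1) ∘ (fun x => (extCycle π k x : ℕ)) ∘ Fin.castSucc := by
  funext j
  rcases eq_or_ne j k with rfl | h
  · simp
  · simp [h, extCycle_castSucc_of_ne π h]

theorem descSeq_update_eq (π : Perm (Fin n)) (k : Fin n) :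
    descSeq (Function.update (fun i => ((π i : ℕ) + 1)) k (n + 1))
      = descSet (extCycle π k) ∩ Finset.range (n - 1) := by
  rw [update_eq_comp_extCycle, descSeq_comp_strictMono (fun _ _ => Nat.succ_lt_succ),
    descSeq_comp_castSucc, descSet]

end Descents

theorem update_injective {n : ℕ} :
    Function.Injective (fun p : Perm (Fin n) × Fin n =>
      Function.update (fun i => ((p.1 i : ℕ) + 1)) p.2 (n + 1)) := by
  rintro ⟨π, k⟩ ⟨π', k'⟩ h
  dsimp only at h
  obtain rfl : k = k' := by
    by_contra hne
    have := congrFun h k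
    rw [Function.update_self, Function.update_of_ne hne] at this
    have := (π' k).isLt
    omega
  have hoff : ∀ i, i ≠ k → π i = π' i := fun i hi => Fin.ext <| by
    have := congrFun h i
    rw [Function.update_of_ne hi, Function.update_of_ne hi] at this
    omega
  rw [eq_of_apply_eq_of_ne k hoff]

theorem stmt19 (n : ℕ) (hn : 1 ≤ n) :
    ∃ Φ : {τ : Fin n → ℕ // InU n τ} ≃
        {π : Equiv.Perm (Fin (n + 1)) // IsCyclic' π},
      ∀ (π : Equiv.Perm (Fin n)) (k : Fin n) (h : IsCyclic' π),
        (Φ ⟨Function.update (fun i => ((π i : ℕ) + 1)) k (n + 1),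
            ⟨π, k, h, rfl⟩⟩).1 = extCycle π k ∧
        descSeq (Function.update (fun i => ((π i : ℕ) + 1)) k (n + 1))
          = descSet (extCycle π k) ∩ Finset.range (n - 1) := by
  let P := {p : Perm (Fin n) × Fin n // IsCyclic' p.1}
  let toU : P → {τ : Fin n → ℕ // InU n τ} := fun p =>
    ⟨Function.update (fun i => ((p.1.1 i : ℕ) + 1)) p.1.2 (n + 1), p.1.1, p.1.2, p.2, rfl⟩
  let toCycle : P → {σ : Perm (Fin (n + 1)) // IsCyclic' σ} := fun p =>
    ⟨extCycle p.1.1 p.1.2, (isCyclic'_extCycle_iff _ _).2 p.2⟩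
  have hU : Function.Bijective toU := by
    refine ⟨fun p q h => Subtype.ext (update_injective (congrArg Subtype.val h)), ?_⟩
    rintro ⟨τ, π, k, hπ, rfl⟩
    exact ⟨⟨(π, k), hπ⟩, rfl⟩
  have hCycle : Function.Bijective toCycle := by
    refine ⟨fun p q h => Subtype.ext (extCycle_injective (congrArg Subtype.val h)), ?_⟩
    rintro ⟨σ, hσ⟩
    obtain ⟨π, k, rfl⟩ := exists_extCycle_eq hn hσ
    exact ⟨⟨(π, k), (isCyclic'_extCycle_iff π k).1 hσ⟩, rfl⟩
  refine ⟨(Equiv.ofBijective toU hU).symm.trans (Equiv.ofBijective toCycle hCycle),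
    fun π k h => ⟨?_, descSeq_update_eq π k⟩⟩
  exact congrArg (fun p => (toCycle p).1)
    ((Equiv.ofBijective toU hU).symm_apply_apply ⟨(π, k), h⟩)
end
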